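/- arXiv:2408.16297 — 6 statements merged into one kernel-verified Lean document; each statement's English description precedes it below -/
import Mathlib

section
/- For every integer k ≥ 1, the graph H_k is (k+1)-γ'_MB-critical; that is, γ'_MB(H_k) = k+1 and γ'_MB(H_k − e) > k+1 for every edge e of H_k. -/
/-!
Maker–Breaker domination game.  The players Dominator and Staller alternately select
previously unselected vertices of a graph `G`.  Dominator wins if at some point his selected
vertices form a dominating set of `G`; Staller wins if she selects all vertices of the closed
neighbourhood of some vertex.  Below, `D` always denotes the set of vertices selected by
Dominator so far and `S` the set selected by Staller.
-/

namespace MBD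

variable {V : Type*}

/-- `D` is a dominating set of `G`. -/
def IsDomSet (G : SimpleGraph V) (D : Set V) : Prop :=
  ∀ v, v ∈ D ∨ ∃ u ∈ D, G.Adj u v

/-- Dominator is to move.  `DWin G k D S` says that Dominator has a strategy guaranteeing
that his selected set becomes a dominating set of `G` after at most `k` further moves of his
(the game ends when all vertices have been selected). -/
def DWin (G : SimpleGraph V) : ℕ → Set V → Set V → Prop
  | 0, D, _ => IsDomSet G D
  | (k+1), D, S => IsDomSet G D ∨
      ∃ v ∉ D ∪ S,
        (IsDomSet G (insert v D) ∨
          ((∃ w, w ∉ insert v D ∪ S) ∧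
            ∀ w ∉ insert v D ∪ S, DWin G k (insert v D) (insert w S)))

/-- Staller is to move, and Dominator can win using at most `k` further moves of his. -/
def DWinS (G : SimpleGraph V) (k : ℕ) (D S : Set V) : Prop :=
  IsDomSet G D ∨
    ((∃ w, w ∉ D ∪ S) ∧ ∀ w ∉ D ∪ S, DWin G k D (insert w S))

/-- The Maker–Breaker domination number `γ_MB` of `G`: the least `k` such that Dominator,
moving first (D-game), can win within at most `k` of his moves; `∞` if he cannot win. -/
noncomputable def gammaMB (G : SimpleGraph V) : ℕ∞ :=
  sInf (Nat.cast '' {k : ℕ | DWin G k ∅ ∅})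

/-- The Maker–Breaker domination number `γ'_MB` of `G`: the least `k` such that Dominator
can win within at most `k` of his moves in the S-game (Staller moves first); `∞` if he
cannot win. -/
noncomputable def gammaMB' (G : SimpleGraph V) : ℕ∞ :=
  sInf (Nat.cast '' {k : ℕ | DWinS G k ∅ ∅})

/-- Staller has won: she has selected all vertices of the closed neighbourhood `N[v]`
of some vertex `v`. -/
def IsStallerWin (G : SimpleGraph V) (S : Set V) : Prop :=
  ∃ v, v ∈ S ∧ ∀ u, G.Adj v u → u ∈ S

/-- Staller is to move.  `SWin G k D S` says Staller has a strategy to win using at most `k`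
further moves of hers. -/
def SWin (G : SimpleGraph V) : ℕ → Set V → Set V → Prop
  | 0, _, S => IsStallerWin G S
  | (k+1), D, S => IsStallerWin G S ∨
      ∃ v ∉ D ∪ S,
        (IsStallerWin G (insert v S) ∨
          ((∃ w, w ∉ D ∪ insert v S) ∧
            ∀ w ∉ D ∪ insert v S, SWin G k (insert w D) (insert v S)))

/-- Dominator is to move, and Staller can win within at most `k` further moves of hers. -/
def SWinD (G : SimpleGraph V) (k : ℕ) (D S : Set V) : Prop :=
  IsStallerWin G S ∨
    ((∃ w, w ∉ D ∪ S) ∧ ∀ w ∉ D ∪ S, SWin G k (insert w D) S)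

/-- The Staller-Maker–Breaker domination number `γ_SMB` of `G`: the least `k` such that
Staller can win within at most `k` of her moves in the D-game (Dominator starts);
`∞` if she cannot win. -/
noncomputable def gammaSMB (G : SimpleGraph V) : ℕ∞ :=
  sInf (Nat.cast '' {k : ℕ | SWinD G k ∅ ∅})

/-- The Staller-Maker–Breaker domination number `γ'_SMB` of `G`: the least `k` such that
Staller can win within at most `k` of her moves in the S-game (Staller starts);
`∞` if she cannot win. -/
noncomputable def gammaSMB' (G : SimpleGraph V) : ℕ∞ :=
  sInf (Nat.cast '' {k : ℕ | SWin G k ∅ ∅})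

end MBD

open MBD

/-- The graph `H_k`: `k+1` disjoint copies of `K_{2,3}` indexed by `i : Fin (k+1)`, the `i`-th
copy having bipartition `{x_i, x_i'} = {(i,0),(i,1)}` and `{y_i, y_i', y_i''} = {(i,2),(i,3),(i,4)}`,
together with all edges between each of `x_{k+1} = (k,0)`, `x_{k+1}' = (k,1)` and all of the
vertices `x_i, x_i'` with `i ∈ [k]`. -/
def HkGraph (k : ℕ) : SimpleGraph (Fin (k+1) × Fin 5) :=
  SimpleGraph.fromRel (fun a b =>
    (a.1 = b.1 ∧ a.2.val ≤ 1 ∧ 2 ≤ b.2.val) ∨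
    (a.1.val = k ∧ b.1.val ≠ k ∧ a.2.val ≤ 1 ∧ b.2.val ≤ 1))

/-!
Dominator wins on `H_k` within `k + 1` moves by the pairing strategy on the pairs
`{x_i, x_i'}`, because every choice of one vertex from each pair dominates `H_k`.
Conversely, the `y`-vertices of a copy of `K_{2,3}` have all their neighbours inside that copy,
so every dominating set of a spanning subgraph of `H_k` meets each of the `k + 1` copies, and it
has at least `k + 2` vertices as soon as it contains a `y`-vertex.  After the deletion of an
edge `e`, Staller forces Dominator to take a `y`-vertex: for `e = x_i y_i` she opens with
`x_i'`; for `e = x_{k+1} x_j` she opens with `x_{k+1}'` and then takes `x_j` if Dominator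
took `x_{k+1}`, and `x_{k+1}` otherwise.
-/

open Finset

namespace MBD

variable {V : Type*} {G : SimpleGraph V}

theorem dWin_succ_iff {m : ℕ} {D S : Set V} :
    DWin G (m + 1) D S ↔ IsDomSet G D ∨ ∃ v ∉ D ∪ S, DWinS G m (insert v D) S :=
  Iff.rfl

theorem not_isDomSet_empty (w : V) : ¬ IsDomSet G ∅ := fun h => by
  simpa using h w

theorem DWin.exists_dominating {m : ℕ} {D S : Set V} (h : DWin G m D S) :
    ∃ T : Finset V, #T ≤ m ∧ Disjoint (↑T) S ∧ IsDomSet G (D ∪ ↑T) := by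
  classical
  induction m generalizing D S with
  | zero => exact ⟨∅, by simp, by simp, by simpa [DWin] using h⟩
  | succ m ih =>
    rcases dWin_succ_iff.mp h with hD | ⟨v, hv, hD | ⟨⟨w, hw⟩, hnext⟩⟩
    · exact ⟨∅, by simp, by simp, by simpa using hD⟩
    · exact ⟨{v}, by simp, by simp_all, by simpa using hD⟩
    · obtain ⟨T, hcard, hdisj, hdom⟩ := ih (hnext w hw)
      refine ⟨insert v T, (card_insert_le _ _).trans (by omega), ?_, ?_⟩
      · rw [coe_insert, Set.disjoint_insert_left]
        exact ⟨fun hvS => hv (Or.inr hvS), hdisj.mono_right (Set.subset_insert _ _)⟩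
      · rwa [coe_insert, Set.union_insert, ← Set.insert_union]

theorem DWinS.exists_dominating {m : ℕ} {D S : Set V} {w : V} (h : DWinS G m D S)
    (hw : w ∉ D ∪ S) :
    ∃ T : Finset V, #T ≤ m ∧ Disjoint (↑T) (insert w S) ∧ IsDomSet G (D ∪ ↑T) := by
  rcases h with hD | ⟨-, hnext⟩
  · exact ⟨∅, by simp, by simp, by simpa using hD⟩
  · exact (hnext w hw).exists_dominating

/-- Staller opens with `w` and answers Dominator's first move `v` with `reply v`. -/
theorem DWinS.exists_dominating_of_reply {m : ℕ} (h : DWinS G m ∅ ∅) (w : V) (reply : V → V)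
    (hreply : ∀ v ≠ w, reply v ≠ v ∧ reply v ≠ w) :
    ∃ v, ∃ T : Finset V, #T ≤ m ∧ v ∈ T ∧ w ∉ T ∧ reply v ∉ T ∧ IsDomSet G ↑T := by
  classical
  rcases h with h | ⟨-, hnext⟩
  · exact absurd h (not_isDomSet_empty w)
  cases m with
  | zero => exact absurd (hnext w (by simp)) (not_isDomSet_empty w)
  | succ n =>
    rcases dWin_succ_iff.mp (hnext w (by simp)) with h | ⟨v, hv, hnext⟩
    · exact absurd h (not_isDomSet_empty w)
    have hvw : v ≠ w := by simpa using hv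
    obtain ⟨T, hcard, hdisj, hdom⟩ :=
      hnext.exists_dominating (w := reply v) (by simpa [and_comm] using hreply v hvw)
    have hw : w ∉ T := fun hwT => Set.disjoint_left.mp hdisj hwT (by simp)
    have hr : reply v ∉ T := fun hrT => Set.disjoint_left.mp hdisj hrT (by simp)
    refine ⟨v, insert v T, (card_insert_le _ _).trans (by omega), mem_insert_self _ _, ?_, ?_, ?_⟩
    · simpa [hvw.symm] using hw
    · simpa [(hreply v hvw).1] using hr
    · simpa using hdom

/-- Pairing strategy: Dominator answers Staller inside the pair she touched, and otherwise
claims an untouched pair. -/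
theorem dWinS_of_pairing {ι : Type*} [DecidableEq ι] {pair : ι × Bool → V}
    (hpair : pair.Injective) (hdom : ∀ D : Set V, (∀ i, ∃ b, pair (i, b) ∈ D) → IsDomSet G D)
    (A : Finset ι) (D S : Set V) (hclaimed : ∀ i ∉ A, ∃ b, pair (i, b) ∈ D)
    (hfree : ∀ i ∈ A, ∀ b, pair (i, b) ∉ D ∪ S) : DWinS G #A D S := by
  induction A using Finset.strongInduction generalizing D S with
  | H A ih =>
  rcases A.eq_empty_or_nonempty with rfl | ⟨i₀, hi₀⟩
  · exact Or.inl (hdom D fun i => hclaimed i (notMem_empty i))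
  refine Or.inr ⟨⟨_, hfree i₀ hi₀ false⟩, fun w hw => ?_⟩
  obtain ⟨i₁, hi₁, b₁, hw₁, hwA⟩ : ∃ i₁ ∈ A, ∃ b₁, pair (i₁, b₁) ≠ w ∧
      ∀ i ∈ A, i ≠ i₁ → ∀ b, pair (i, b) ≠ w := by
    by_cases hwA : ∃ i ∈ A, ∃ b, pair (i, b) = w
    · obtain ⟨i, hi, b, rfl⟩ := hwA
      exact ⟨i, hi, !b, fun h => Bool.not_ne_self b (congrArg Prod.snd (hpair h)),
        fun i' _ hi' b' h => hi' (congrArg Prod.fst (hpair h))⟩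
    · push Not at hwA
      exact ⟨i₀, hi₀, false, hwA i₀ hi₀ false, fun i hi _ b => hwA i hi b⟩
  rw [← card_erase_add_one hi₁]
  refine dWin_succ_iff.mpr (Or.inr ⟨pair (i₁, b₁), ?_, ih _ (erase_ssubset hi₁) _ _ ?_ ?_⟩)
  · have := hfree i₁ hi₁ b₁
    simp_all
  · intro i hi
    by_cases hii : i = i₁
    · exact ⟨b₁, hii ▸ Set.mem_insert _ _⟩
    · obtain ⟨b, hb⟩ := hclaimed i (by simp_all)
      exact ⟨b, Set.mem_insert_of_mem _ hb⟩
  · intro i hi b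
    obtain ⟨hii, hiA⟩ := mem_erase.mp hi
    have hne : pair (i, b) ≠ pair (i₁, b₁) := fun h => hii (congrArg Prod.fst (hpair h))
    have := hfree i hiA b
    simp_all [hwA i hiA hii b]

theorem gammaMB'_le {m : ℕ} (h : DWinS G m ∅ ∅) : gammaMB' G ≤ m :=
  sInf_le ⟨m, h, rfl⟩

theorem le_gammaMB' {n : ℕ} (h : ∀ m, DWinS G m ∅ ∅ → n ≤ m) : (n : ℕ∞) ≤ gammaMB' G :=
  le_sInf <| by
    rintro _ ⟨m, hm, rfl⟩
    exact_mod_cast h m hm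

theorem gammaMB'_le_card_of_pairing {ι : Type*} [Fintype ι] [DecidableEq ι]
    {pair : ι × Bool → V} (hpair : pair.Injective)
    (hdom : ∀ D : Set V, (∀ i, ∃ b, pair (i, b) ∈ D) → IsDomSet G D) :
    gammaMB' G ≤ Fintype.card ι := by
  simpa using gammaMB'_le (dWinS_of_pairing hpair hdom univ ∅ ∅ (by simp) (by simp))

end MBD

section HkGraph

variable {k : ℕ}

theorem hkGraph_adj {u v : Fin (k+1) × Fin 5} : (HkGraph k).Adj u v ↔
    (u.1 = v.1 ∧ (u.2.val ≤ 1 ∧ 2 ≤ v.2.val ∨ v.2.val ≤ 1 ∧ 2 ≤ u.2.val)) ∨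
    (u.1 ≠ v.1 ∧ u.2.val ≤ 1 ∧ v.2.val ≤ 1 ∧ (u.1 = Fin.last k ∨ v.1 = Fin.last k)) := by
  simp only [HkGraph, SimpleGraph.fromRel_adj, ne_eq, Prod.ext_iff, Fin.ext_iff, Fin.val_last]
  omega

theorem hkGraph_adj_of_two_le {u : Fin (k+1) × Fin 5} {i : Fin (k+1)} {c : Fin 5}
    (hc : 2 ≤ c.val) : (HkGraph k).Adj u (i, c) ↔ u.1 = i ∧ u.2.val ≤ 1 := by
  rw [hkGraph_adj]
  dsimp only
  omega

theorem isDomSet_hkGraph (hk : 1 ≤ k) {D : Set (Fin (k+1) × Fin 5)}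
    (hD : ∀ i, ∃ a : Fin 5, a.val ≤ 1 ∧ (i, a) ∈ D) : IsDomSet (HkGraph k) D := by
  rintro ⟨i, c⟩
  right
  by_cases hc : 2 ≤ c.val
  · obtain ⟨a, ha, haD⟩ := hD i
    exact ⟨(i, a), haD, (hkGraph_adj_of_two_le hc).2 ⟨rfl, ha⟩⟩
  -- an x-vertex is dominated from the hub copy, and the hub copy from copy `0`
  obtain ⟨j, hji, hj⟩ : ∃ j, j ≠ i ∧ (j = Fin.last k ∨ i = Fin.last k) := by
    by_cases hi : i = Fin.last k
    · refine ⟨0, ?_, Or.inr hi⟩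
      simp [hi, Fin.ext_iff]
      omega
    · exact ⟨Fin.last k, Ne.symm hi, Or.inl rfl⟩
  obtain ⟨a, ha, haD⟩ := hD j
  exact ⟨(j, a), haD, hkGraph_adj.2 (Or.inr ⟨hji, ha, by simpa using hc, hj⟩)⟩

theorem succ_le_card_of_forall_exists_fst {T : Finset (Fin (k+1) × Fin 5)}
    (hT : ∀ i, ∃ t ∈ T, t.1 = i) : k + 1 ≤ #T := by
  simpa using card_le_card_of_surjOn Prod.fst (t := univ) fun i _ => hT i

variable {G : SimpleGraph (Fin (k+1) × Fin 5)} {T : Finset (Fin (k+1) × Fin 5)}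

theorem exists_mem_fst_eq_of_isDomSet (hG : G ≤ HkGraph k) (hT : IsDomSet G ↑T)
    (i : Fin (k+1)) : ∃ t ∈ T, t.1 = i := by
  rcases hT (i, 2) with h | ⟨u, hu, hadj⟩
  · exact ⟨_, h, rfl⟩
  · exact ⟨u, hu, ((hkGraph_adj_of_two_le le_rfl).1 (hG hadj)).1⟩

theorem succ_le_card_of_isDomSet (hG : G ≤ HkGraph k) (hT : IsDomSet G ↑T) : k + 1 ≤ #T :=
  succ_le_card_of_forall_exists_fst (exists_mem_fst_eq_of_isDomSet hG hT)

/-- A `y`-vertex in `T` forces a second vertex of `T` in its copy, since the other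
`y`-vertices of that copy must be dominated too. -/
theorem add_two_le_card_of_isDomSet (hG : G ≤ HkGraph k) (hT : IsDomSet G ↑T)
    {t : Fin (k+1) × Fin 5} (ht : t ∈ T) (ht₂ : 2 ≤ t.2.val) : k + 2 ≤ #T := by
  classical
  obtain ⟨c, hc, hct⟩ : ∃ c : Fin 5, 2 ≤ c.val ∧ c ≠ t.2 := by
    revert ht₂; generalize t.2 = d; revert d; decide
  obtain ⟨u, hu, hut, hu₁⟩ : ∃ u ∈ T, u ≠ t ∧ u.1 = t.1 := by
    rcases hT (t.1, c) with h | ⟨u, hu, hadj⟩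
    · exact ⟨_, h, fun h' => hct (congrArg Prod.snd h'), rfl⟩
    · obtain ⟨hu₁, hu₂⟩ := (hkGraph_adj_of_two_le hc).1 (hG hadj)
      exact ⟨u, hu, by rintro rfl; omega, hu₁⟩
  have : k + 1 ≤ #(T.erase t) := by
    refine succ_le_card_of_forall_exists_fst fun i => ?_
    obtain ⟨s, hs, rfl⟩ := exists_mem_fst_eq_of_isDomSet hG hT i
    by_cases hst : s = t
    · exact ⟨u, mem_erase.2 ⟨hut, hu⟩, hst ▸ hu₁⟩
    · exact ⟨s, mem_erase.2 ⟨hst, hs⟩, rfl⟩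
  have := card_erase_add_one ht
  omega

theorem hkGraph_edge_cases {e : Sym2 (Fin (k+1) × Fin 5)} (he : e ∈ (HkGraph k).edgeSet) :
    (∃ i a b, a.val ≤ 1 ∧ 2 ≤ b.val ∧ e = s((i, a), (i, b))) ∨
    (∃ j a b, j ≠ Fin.last k ∧ a.val ≤ 1 ∧ b.val ≤ 1 ∧ e = s((Fin.last k, a), (j, b))) := by
  induction e using Sym2.ind with
  | _ u v =>
  obtain ⟨i, a⟩ := u
  obtain ⟨j, b⟩ := v
  have hadj := hkGraph_adj.1 ((SimpleGraph.mem_edgeSet _).1 he)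
  dsimp only at hadj
  rcases hadj with ⟨rfl, h | h⟩ | ⟨hij, ha, hb, rfl | rfl⟩
  · exact Or.inl ⟨i, a, b, h.1, h.2, rfl⟩
  · exact Or.inl ⟨i, b, a, h.1, h.2, Sym2.eq_swap⟩
  · exact Or.inr ⟨j, a, b, hij.symm, ha, hb, rfl⟩
  · exact Or.inr ⟨i, b, a, hij, hb, ha, Sym2.eq_swap⟩

theorem exists_other_val_le_one (a : Fin 5) (ha : a.val ≤ 1) :
    ∃ a', a'.val ≤ 1 ∧ a' ≠ a ∧ ∀ c : Fin 5, c.val ≤ 1 → c = a ∨ c = a' := by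
  revert a; decide

theorem gammaMB'_hkGraph (hk : 1 ≤ k) : gammaMB' (HkGraph k) = k + 1 := by
  refine le_antisymm ?_ ?_
  · have hpair : Function.Injective
        fun p : Fin (k+1) × Bool => (p.1, if p.2 then (1 : Fin 5) else 0) := by
      rintro ⟨i, b⟩ ⟨j, b'⟩ h
      simp only [Prod.mk.injEq] at h
      cases b <;> cases b' <;> simp_all
    have := gammaMB'_le_card_of_pairing hpair fun D hD => isDomSet_hkGraph hk fun i => by
      obtain ⟨b, hb⟩ := hD i
      exact ⟨_, by split <;> decide, hb⟩
    simpa using this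
  · exact_mod_cast le_gammaMB' fun m h => by
      obtain ⟨T, hcard, -, hdom⟩ := h.exists_dominating (w := (0, 0)) (by simp)
      exact (succ_le_card_of_isDomSet le_rfl (by simpa using hdom)).trans hcard

theorem add_two_le_of_dWinS_deleteEdges_xy {i : Fin (k+1)} {a b : Fin 5} (ha : a.val ≤ 1)
    (hb : 2 ≤ b.val) {m : ℕ} (h : DWinS ((HkGraph k).deleteEdges {s((i, a), (i, b))}) m ∅ ∅) :
    k + 2 ≤ m := by
  obtain ⟨a', -, -, hx⟩ := exists_other_val_le_one a ha
  -- Staller takes the other neighbour of `(i, b)`, so Dominator must take `(i, b)` itself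
  obtain ⟨T, hcard, hdisj, hdom⟩ := h.exists_dominating (w := (i, a')) (by simp)
  rw [Set.empty_union] at hdom
  have hbT : (i, b) ∈ T := by
    rcases hdom (i, b) with hbT | ⟨u, hu, hadj⟩
    · exact hbT
    obtain ⟨hadj, hne⟩ := SimpleGraph.deleteEdges_adj.1 hadj
    obtain ⟨hu₁, hu₂⟩ := (hkGraph_adj_of_two_le hb).1 hadj
    rcases hx u.2 hu₂ with hua | hua
    · obtain rfl : u = (i, a) := Prod.ext hu₁ hua
      exact (hne rfl).elim
    · obtain rfl : u = (i, a') := Prod.ext hu₁ hua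
      exact (Set.disjoint_left.mp hdisj hu (by simp)).elim
  exact (add_two_le_card_of_isDomSet (SimpleGraph.deleteEdges_le _) hdom hbT hb).trans hcard

theorem add_two_le_of_dWinS_deleteEdges_xx {j : Fin (k+1)} (hj : j ≠ Fin.last k) {a b : Fin 5}
    (ha : a.val ≤ 1) (hb : b.val ≤ 1) {m : ℕ}
    (h : DWinS ((HkGraph k).deleteEdges {s((Fin.last k, a), (j, b))}) m ∅ ∅) : k + 2 ≤ m := by
  classical
  obtain ⟨a', -, ha'a, hx⟩ := exists_other_val_le_one a ha
  obtain ⟨v, T, hcard, -, hw, hr, hdom⟩ := h.exists_dominating_of_reply (Fin.last k, a')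
    (fun v => if v = (Fin.last k, a) then (j, b) else (Fin.last k, a)) fun v _ => by
      split_ifs with hva
      · exact ⟨fun h => hj (congrArg Prod.fst (h.trans hva)), fun h => hj (congrArg Prod.fst h)⟩
      · exact ⟨Ne.symm hva, fun h => ha'a (congrArg Prod.snd h).symm⟩
  have hlast : ∀ u ∈ T, u.1 = Fin.last k → u.2.val ≤ 1 → u = (Fin.last k, a) :=
    fun u hu hu₁ hu₂ => Prod.ext hu₁ <| (hx u.2 hu₂).resolve_right <| by
      rintro hua
      exact hw ((Prod.ext hu₁ hua : u = (Fin.last k, a')) ▸ hu)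
  suffices ∃ t ∈ T, 2 ≤ t.2.val by
    obtain ⟨t, ht, ht₂⟩ := this
    exact (add_two_le_card_of_isDomSet (SimpleGraph.deleteEdges_le _) hdom ht ht₂).trans hcard
  by_cases hv : v = (Fin.last k, a)
  · rw [if_pos hv] at hr
    rcases hdom (j, b) with hjb | ⟨u, hu, hadj⟩
    · exact absurd hjb hr
    obtain ⟨hadj, hne⟩ := SimpleGraph.deleteEdges_adj.1 hadj
    have hu := hkGraph_adj.1 hadj
    dsimp only at hu
    rcases hu with ⟨-, ⟨-, hb'⟩ | ⟨-, hu₂⟩⟩ | ⟨-, hu₂, -, hu₁ | hj'⟩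
    · omega
    · exact ⟨u, hu, hu₂⟩
    · rw [hlast u hu hu₁ hu₂] at hne
      exact (hne rfl).elim
    · exact absurd hj' hj
  · rw [if_neg hv] at hr
    refine ⟨(Fin.last k, 2), ?_, le_rfl⟩
    rcases hdom (Fin.last k, 2) with h2 | ⟨u, hu, hadj⟩
    · exact h2
    obtain ⟨hu₁, hu₂⟩ := (hkGraph_adj_of_two_le le_rfl).1 (SimpleGraph.deleteEdges_le _ hadj)
    exact (hr (hlast u hu hu₁ hu₂ ▸ hu)).elim

end HkGraph

/-- For every `k ≥ 1`, the graph `H_k` is `(k+1)`-`γ'_MB`-critical: `γ'_MB(H_k) = k + 1`, and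
`γ'_MB(H_k − e) > k + 1` for every edge `e` of `H_k`. -/
theorem Hk_is_kplus1_gammaMB'_critical (k : ℕ) (hk : 1 ≤ k) :
    gammaMB' (HkGraph k) = (k : ℕ∞) + 1 ∧
      ∀ e ∈ (HkGraph k).edgeSet,
        (k : ℕ∞) + 1 < gammaMB' ((HkGraph k).deleteEdges {e}) := by
  refine ⟨gammaMB'_hkGraph hk, fun e he => ?_⟩
  have hcrit : ∀ m, DWinS ((HkGraph k).deleteEdges {e}) m ∅ ∅ → k + 2 ≤ m := by
    rcases hkGraph_edge_cases he with ⟨i, a, b, ha, hb, rfl⟩ | ⟨j, a, b, hj, ha, hb, rfl⟩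
    · exact fun m => add_two_le_of_dWinS_deleteEdges_xy ha hb
    · exact fun m => add_two_le_of_dWinS_deleteEdges_xx hj ha hb
  calc (k : ℕ∞) + 1 < (k + 2 : ℕ) := by norm_cast; omega
    _ ≤ _ := le_gammaMB' hcrit
end

section
/- A connected graph G is 2-γ_MB-critical if and only if G is isomorphic to the graph obtained from a star K_{1,n} with n ≥ 1 and center u, together with a disjoint complete bipartite graph K_{2,m} with m ≥ 2 and bipartition {x_1, x_2}, {y_1, …, y_m}, by adding the two edges ux_1 and ux_2. -/
open MBD

/-- The graph obtained from a star `K_{1,n}` with centre `u = inl ()` and leaves `Fin n`,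
together with a disjoint complete bipartite graph `K_{2,m}` with bipartition
`{x_1, x_2} = Fin 2` and `{y_1, …, y_m} = Fin m`, by adding the edges `u x_1` and `u x_2`. -/
def StarK2m (n m : ℕ) : SimpleGraph (Unit ⊕ (Fin n ⊕ (Fin 2 ⊕ Fin m))) :=
  SimpleGraph.fromRel (fun a b =>
    match a, b with
    | Sum.inl _, Sum.inr (Sum.inl _) => True
    | Sum.inl _, Sum.inr (Sum.inr (Sum.inl _)) => True
    | Sum.inr (Sum.inr (Sum.inl _)), Sum.inr (Sum.inr (Sum.inr _)) => True
    | _, _ => False)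

/-!
Dominator wins in one move iff a set of at most one vertex dominates, and in two moves iff in
addition (or instead) there is a fork: a vertex `u` with two partners `x₁ ≠ x₂` such that both
`{u, x₁}` and `{u, x₂}` dominate. So `G` is 2-`γ_MB`-critical iff it has no dominating vertex, has
a fork, and no fork survives the deletion of any edge.

Deleting `pq` keeps a set `D` dominating unless one endpoint lies outside `D` and has the other as
its only neighbour in `D`. Applied to every edge of a critical graph with fork `(u, x₁, x₂)`, this
shows that `u` is adjacent to `x₁` and `x₂`, `x₁` and `x₂` are not adjacent, the other neighbours
of `u` are leaves, and the vertices outside `N[u]` form an independent set joined to both `x₁` and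
`x₂`; two auxiliary forks force at least one leaf and two such vertices. This is `StarK2m n m`, the
blow-up of the path `0 - 1 - 2 - 3` with parts of sizes `n, 1, 2, m`. Conversely, in that graph
the only dominating pairs are the `{u, xᵢ}`, and every edge has an endpoint whose only neighbour in
one of them is the other endpoint.
-/

namespace MBD

open SimpleGraph

variable {V : Type*} {G : SimpleGraph V}

lemma IsDomSet.mono {G' : SimpleGraph V} (h : G ≤ G') {D : Set V} (hD : IsDomSet G D) :
    IsDomSet G' D :=
  fun v => (hD v).imp_right fun ⟨w, hw, hwv⟩ => ⟨w, hw, h hwv⟩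

lemma IsDomSet.exists_mem {D : Set V} (h : IsDomSet G D) (v : V) :
    ∃ d ∈ D, d = v ∨ G.Adj d v :=
  (h v).elim (fun hv => ⟨v, hv, Or.inl rfl⟩) fun ⟨d, hd, hdv⟩ => ⟨d, hd, Or.inr hdv⟩

lemma IsDomSet.adj_of_not_adj {a b v : V} (h : IsDomSet G {a, b}) (hva : v ≠ a) (hvb : v ≠ b)
    (hav : ¬ G.Adj a v) : G.Adj b v := by
  obtain hv | ⟨w, hw, hwv⟩ := h v
  · simp_all
  · rcases hw with rfl | rfl
    exacts [absurd hwv hav, hwv]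

structure IsExtPrivateNeighbor (G : SimpleGraph V) (D : Set V) (p q : V) : Prop where
  mem : p ∈ D
  not_mem : q ∉ D
  eq_of_adj : ∀ r ∈ D, G.Adj r q → r = p

lemma IsExtPrivateNeighbor.not_isDomSet_deleteEdges {D : Set V} {p q : V}
    (h : IsExtPrivateNeighbor G D p q) : ¬ IsDomSet (G.deleteEdges {s(p, q)}) D := by
  intro hD
  obtain hq | ⟨r, hr, hrq⟩ := hD q
  · exact h.not_mem hq
  rw [deleteEdges_adj] at hrq
  exact hrq.2 (by rw [h.eq_of_adj r hr hrq.1]; rfl)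

lemma IsDomSet.deleteEdges {D : Set V} {p q : V} (hD : IsDomSet G D)
    (hpq : ¬ IsExtPrivateNeighbor G D p q) (hqp : ¬ IsExtPrivateNeighbor G D q p) :
    IsDomSet (G.deleteEdges {s(p, q)}) D := by
  intro v
  obtain hv | ⟨w, hw, hwv⟩ := hD v
  · exact Or.inl hv
  by_cases he : s(w, v) = s(p, q)
  swap
  · exact Or.inr ⟨w, hw, G.deleteEdges_adj.2 ⟨hwv, he⟩⟩
  by_cases hv : v ∈ D
  · exact Or.inl hv
  have hpriv : ¬ IsExtPrivateNeighbor G D w v := by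
    rcases Sym2.eq_iff.1 he with ⟨rfl, rfl⟩ | ⟨rfl, rfl⟩
    exacts [hpq, hqp]
  obtain ⟨r, hr, hrv, hrw⟩ : ∃ r ∈ D, G.Adj r v ∧ r ≠ w := by
    by_contra! hne
    exact hpriv ⟨hw, hv, hne⟩
  refine Or.inr ⟨r, hr, G.deleteEdges_adj.2 ⟨hrv, fun hrv' => ?_⟩⟩
  rw [Set.mem_singleton_iff, ← he, Sym2.eq_iff] at hrv'
  exact hrv'.elim (fun h => hrw h.1) (fun h => G.ne_of_adj hrv h.1)

lemma isExtPrivateNeighbor_pair {s r t : V} (hts : t ≠ s) (htr : t ≠ r) (hrt : ¬ G.Adj r t) :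
    IsExtPrivateNeighbor G {s, r} s t where
  mem := by simp
  not_mem := by simp [hts, htr]
  eq_of_adj := by
    rintro _ (rfl | rfl) hadj
    exacts [rfl, absurd hadj hrt]

lemma DWin.succ {k : ℕ} {D S : Set V} (h : DWin G k D S) : DWin G (k + 1) D S := by
  induction k generalizing D S with
  | zero => exact Or.inl h
  | succ k ih =>
    rw [DWin] at h ⊢
    exact h.imp_right fun ⟨v, hv, hmove⟩ =>
      ⟨v, hv, hmove.imp_right fun ⟨hw, hreply⟩ => ⟨hw, fun w hw' => ih (hreply w hw')⟩⟩

lemma DWin.of_le {j k : ℕ} {D S : Set V} (h : DWin G j D S) (hjk : j ≤ k) : DWin G k D S := by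
  induction k, hjk using Nat.le_induction with
  | base => exact h
  | succ k _ ih => exact ih.succ

lemma gammaMB_le_iff (k : ℕ) : gammaMB G ≤ k ↔ DWin G k ∅ ∅ := by
  refine ⟨fun h => ?_, fun h => sInf_le ⟨k, h, rfl⟩⟩
  have hne : (Nat.cast '' {k : ℕ | DWin G k ∅ ∅} : Set ℕ∞).Nonempty := by
    by_contra hempty
    rw [Set.not_nonempty_iff_eq_empty] at hempty
    simp [gammaMB, hempty] at h
  obtain ⟨j, hj, hjk⟩ := csInf_mem hne
  rw [gammaMB, ← hjk] at h
  exact hj.of_le (by exact_mod_cast h)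

lemma lt_gammaMB_iff (k : ℕ) : k < gammaMB G ↔ ¬ DWin G k ∅ ∅ := by
  rw [← not_le, gammaMB_le_iff]

lemma dWin_one_iff_exists {D S : Set V} :
    DWin G 1 D S ↔ IsDomSet G D ∨ ∃ v ∉ D ∪ S, IsDomSet G (insert v D) := by
  simp only [DWin]
  refine or_congr_right (exists_congr fun v => and_congr_right fun _ => ?_)
  exact ⟨fun h => h.elim id fun ⟨⟨w, hw⟩, hreply⟩ => hreply w hw, Or.inl⟩

def HasSubsingletonDomSet (G : SimpleGraph V) : Prop :=
  ∃ D : Set V, D.Subsingleton ∧ IsDomSet G D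

lemma HasSubsingletonDomSet.mono {G' : SimpleGraph V} (h : G ≤ G')
    (hG : HasSubsingletonDomSet G) : HasSubsingletonDomSet G' :=
  let ⟨D, hD, hdom⟩ := hG; ⟨D, hD, hdom.mono h⟩

lemma dWin_one_iff : DWin G 1 ∅ ∅ ↔ HasSubsingletonDomSet G := by
  rw [dWin_one_iff_exists]
  constructor
  · rintro (h | ⟨v, -, h⟩)
    exacts [⟨∅, Set.subsingleton_empty, h⟩, ⟨{v}, Set.subsingleton_singleton, by simpa using h⟩]
  · rintro ⟨D, hD, h⟩
    obtain rfl | ⟨v, rfl⟩ := hD.eq_empty_or_singleton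
    exacts [Or.inl h, Or.inr ⟨v, by simpa using h⟩]

/-- Dominator opens with `u`; whichever of `x₁`, `x₂` Staller takes, he answers with the other. -/
structure IsDomFork (G : SimpleGraph V) (u x₁ x₂ : V) : Prop where
  ne : x₁ ≠ x₂
  left_ne : x₁ ≠ u
  right_ne : x₂ ≠ u
  isDomSet_left : IsDomSet G {u, x₁}
  isDomSet_right : IsDomSet G {u, x₂}

lemma IsDomFork.symm {u x₁ x₂ : V} (h : IsDomFork G u x₁ x₂) : IsDomFork G u x₂ x₁ :=
  ⟨h.ne.symm, h.right_ne, h.left_ne, h.isDomSet_right, h.isDomSet_left⟩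

lemma dWin_two_iff :
    DWin G 2 ∅ ∅ ↔ HasSubsingletonDomSet G ∨ ∃ u x₁ x₂, IsDomFork G u x₁ x₂ := by
  have hreply {u w : V} : DWin G 1 {u} {w} ↔
      IsDomSet G {u} ∨ ∃ x, x ≠ w ∧ x ≠ u ∧ IsDomSet G {u, x} := by
    simp [dWin_one_iff_exists, Set.pair_comm u, and_assoc]
  have hunfold : DWin G 2 ∅ ∅ ↔ IsDomSet G ∅ ∨ ∃ u, IsDomSet G {u} ∨
      (∃ w, w ≠ u) ∧ ∀ w, w ≠ u → DWin G 1 {u} {w} := by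
    rw [DWin]
    simp [insert_empty_eq]
  constructor
  · rw [hunfold]
    rintro (h | ⟨u, h | ⟨⟨w, hw⟩, hmove⟩⟩)
    · exact Or.inl ⟨∅, Set.subsingleton_empty, h⟩
    · exact Or.inl ⟨{u}, Set.subsingleton_singleton, h⟩
    by_cases hu : IsDomSet G {u}
    · exact Or.inl ⟨{u}, Set.subsingleton_singleton, hu⟩
    obtain ⟨x₁, -, hx₁u, hx₁⟩ := (hreply.1 (hmove w hw)).resolve_left hu
    obtain ⟨x₂, hx₂₁, hx₂u, hx₂⟩ := (hreply.1 (hmove x₁ hx₁u)).resolve_left hu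
    exact Or.inr ⟨u, x₁, x₂, hx₂₁.symm, hx₁u, hx₂u, hx₁, hx₂⟩
  · rintro (h | ⟨u, x₁, x₂, hF⟩)
    · exact (dWin_one_iff.2 h).succ
    refine hunfold.2 (Or.inr ⟨u, Or.inr ⟨⟨x₁, hF.left_ne⟩, fun w _ => hreply.2 (Or.inr ?_)⟩⟩)
    by_cases hw₁ : w = x₁
    · exact ⟨x₂, hw₁ ▸ hF.ne.symm, hF.right_ne, hF.isDomSet_right⟩
    · exact ⟨x₁, Ne.symm hw₁, hF.left_ne, hF.isDomSet_left⟩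

lemma gammaMB_eq_two_iff : gammaMB G = 2 ↔ DWin G 2 ∅ ∅ ∧ ¬ DWin G 1 ∅ ∅ := by
  rw [← gammaMB_le_iff, ← gammaMB_le_iff, Nat.cast_ofNat, Nat.cast_one]
  refine ⟨fun h => by simp [h], fun ⟨h2, h1⟩ => le_antisymm h2 ?_⟩
  simpa [one_add_one_eq_two] using Order.add_one_le_of_lt (not_le.1 h1)

def IsForkCritical (G : SimpleGraph V) : Prop :=
  ∀ e ∈ G.edgeSet, ¬ ∃ u x₁ x₂, IsDomFork (G.deleteEdges {e}) u x₁ x₂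

lemma gammaMB_two_critical_iff :
    (gammaMB G = 2 ∧ ∀ e ∈ G.edgeSet, gammaMB G < gammaMB (G.deleteEdges {e})) ↔
      ¬ HasSubsingletonDomSet G ∧ (∃ u x₁ x₂, IsDomFork G u x₁ x₂) ∧ IsForkCritical G := by
  have hlt {H : SimpleGraph V} : 2 < gammaMB H ↔
      ¬ (HasSubsingletonDomSet H ∨ ∃ u x₁ x₂, IsDomFork H u x₁ x₂) := by
    rw [← dWin_two_iff, ← lt_gammaMB_iff, Nat.cast_ofNat]
  have h2_iff : gammaMB G = 2 ↔
      (∃ u x₁ x₂, IsDomFork G u x₁ x₂) ∧ ¬ HasSubsingletonDomSet G := by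
    rw [gammaMB_eq_two_iff, dWin_two_iff, dWin_one_iff]
    exact ⟨fun ⟨h2, h1⟩ => ⟨h2.resolve_left h1, h1⟩, fun ⟨hF, h1⟩ => ⟨Or.inr hF, h1⟩⟩
  constructor
  · rintro ⟨h2, hcrit⟩
    obtain ⟨hF, h1⟩ := h2_iff.1 h2
    refine ⟨h1, hF, fun e he hFe => ?_⟩
    exact (hlt.1 (h2 ▸ hcrit e he)) (Or.inr hFe)
  · rintro ⟨h1, hF, hcrit⟩
    have h2 := h2_iff.2 ⟨hF, h1⟩
    refine ⟨h2, fun e he => h2 ▸ hlt.2 ?_⟩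
    rintro (h1e | hFe)
    exacts [h1 (h1e.mono (G.deleteEdges_le {e})), hcrit e he hFe]

/-- `c` exhibits `G` as `StarK2m`: the leaves, the centre `u`, `{x₁, x₂}` and `{y₁, …, y_m}` are
the fibres of `0, 1, 2, 3`, and `G` is the blow-up of the path `0 - 1 - 2 - 3` along `c`. -/
structure IsStarK2mLabelling (G : SimpleGraph V) (c : V → Fin 4) : Prop where
  eq_comap : G = (pathGraph 4).comap c
  one_le_ncard_zero : 1 ≤ (c ⁻¹' {0}).ncard
  ncard_one : (c ⁻¹' {1}).ncard = 1
  ncard_two : (c ⁻¹' {2}).ncard = 2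
  two_le_ncard_three : 2 ≤ (c ⁻¹' {3}).ncard

namespace IsStarK2mLabelling

variable {c : V → Fin 4}

lemma adj_iff (h : IsStarK2mLabelling G c) {a b : V} :
    G.Adj a b ↔ (c a : ℕ) + 1 = c b ∨ (c b : ℕ) + 1 = c a := by
  rw [h.eq_comap, comap_adj, pathGraph_adj]

lemma eq_or_adj_label (h : IsStarK2mLabelling G c) {d v : V} (hdv : d = v ∨ G.Adj d v) :
    c d = c v ∨ (c d : ℕ) + 1 = c v ∨ (c v : ℕ) + 1 = c d :=
  hdv.imp (congrArg c) h.adj_iff.1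

lemma eq_of_label_eq_one (h : IsStarK2mLabelling G c) {a b : V} (ha : c a = 1) (hb : c b = 1) :
    a = b :=
  let ⟨_, hu⟩ := Set.ncard_eq_one.1 h.ncard_one
  (hu ▸ Set.subsingleton_singleton : (c ⁻¹' {1}).Subsingleton) ha hb

lemma eq_or_eq_of_label_eq_two (h : IsStarK2mLabelling G c) {a b x : V} (hab : a ≠ b)
    (ha : c a = 2) (hb : c b = 2) (hx : c x = 2) : x = a ∨ x = b := by
  obtain ⟨x₁, x₂, -, hx₁₂⟩ := Set.ncard_eq_two.1 h.ncard_two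
  have ha' : a ∈ c ⁻¹' {2} := ha
  have hb' : b ∈ c ⁻¹' {2} := hb
  have hx' : x ∈ c ⁻¹' {2} := hx
  rw [hx₁₂] at ha' hb' hx'
  simp only [Set.mem_insert_iff, Set.mem_singleton_iff] at ha' hb' hx'
  grind

lemma exists_label_eq_zero (h : IsStarK2mLabelling G c) : ∃ l, c l = 0 :=
  Set.nonempty_of_ncard_ne_zero (s := c ⁻¹' {0}) (by have := h.one_le_ncard_zero; omega)

lemma exists_ne_label_eq (h : IsStarK2mLabelling G c) (i : Fin 4) (hi : i = 2 ∨ i = 3) (q : V) :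
    ∃ v, c v = i ∧ v ≠ q := by
  obtain rfl | rfl := hi
  · exact Set.exists_ne_of_one_lt_ncard (s := c ⁻¹' {2}) (by rw [h.ncard_two]; omega) q
  · exact Set.exists_ne_of_one_lt_ncard (s := c ⁻¹' {3}) (by have := h.two_le_ncard_three; omega) q

lemma not_hasSubsingletonDomSet (h : IsStarK2mLabelling G c) : ¬ HasSubsingletonDomSet G := by
  rintro ⟨D, hD, hdom⟩
  obtain ⟨l, hl⟩ := h.exists_label_eq_zero
  obtain ⟨y, hy, -⟩ := h.exists_ne_label_eq 3 (Or.inr rfl) l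
  obtain ⟨d, hd, hdl⟩ := hdom.exists_mem l
  obtain ⟨d', hd', hdy⟩ := hdom.exists_mem y
  have hl' := h.eq_or_adj_label (hD hd hd' ▸ hdl)
  have hy' := h.eq_or_adj_label hdy
  omega

lemma label_of_isDomSet_pair (h : IsStarK2mLabelling G c) {p q : V} (hD : IsDomSet G {p, q}) :
    c p = 1 ∧ c q = 2 ∨ c p = 2 ∧ c q = 1 := by
  have hdom (v : V) : (p = v ∨ G.Adj p v) ∨ (q = v ∨ G.Adj q v) := by
    obtain ⟨d, hd | hd, hdv⟩ := hD.exists_mem v <;> subst hd <;> simp [hdv]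
  -- a leaf and a `y` have disjoint closed neighbourhoods, one containing `p`, the other `q`
  wlog hpq : (c p = 0 ∨ c p = 1) ∧ (c q = 2 ∨ c q = 3) generalizing p q
  · obtain ⟨l, hl⟩ := h.exists_label_eq_zero
    obtain ⟨y, hy, -⟩ := h.exists_ne_label_eq 3 (Or.inr rfl) l
    have hl' := (hdom l).imp h.eq_or_adj_label h.eq_or_adj_label
    have hy' := (hdom y).imp h.eq_or_adj_label h.eq_or_adj_label
    have hqp : (c q = 0 ∨ c q = 1) ∧ (c p = 2 ∨ c p = 3) := by omega
    exact (this (Set.pair_comm p q ▸ hD) (fun v => (hdom v).symm) hqp).symm.imp And.symm And.symm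
  -- another vertex in the class of `q` can only be dominated by `p`
  obtain ⟨v, hv, hvq⟩ := h.exists_ne_label_eq (c q) hpq.2 q
  have hpv : G.Adj p v := by
    rcases hdom v with (rfl | hpv) | (rfl | hqv)
    · omega
    · exact hpv
    · exact absurd rfl hvq
    · have := h.adj_iff.1 hqv
      omega
  have := h.adj_iff.1 hpv
  omega

lemma isDomSet_pair (h : IsStarK2mLabelling G c) {u x : V} (hu : c u = 1) (hx : c x = 2) :
    IsDomSet G {u, x} := by
  intro v
  by_cases hv : c v = 1
  · exact Or.inl (by simp [h.eq_of_label_eq_one hv hu])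
  by_cases hv3 : c v = 3
  · exact Or.inr ⟨x, by simp, h.adj_iff.2 (by omega)⟩
  · exact Or.inr ⟨u, by simp, h.adj_iff.2 (by omega)⟩

lemma exists_isDomFork (h : IsStarK2mLabelling G c) : ∃ u x₁ x₂, IsDomFork G u x₁ x₂ := by
  obtain ⟨u, hu⟩ := Set.nonempty_of_ncard_ne_zero (s := c ⁻¹' {1}) (by rw [h.ncard_one]; omega)
  obtain ⟨x₁, hx₁, -⟩ := h.exists_ne_label_eq 2 (Or.inl rfl) u
  obtain ⟨x₂, hx₂, hx₂₁⟩ := h.exists_ne_label_eq 2 (Or.inl rfl) x₁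
  have hu : c u = 1 := hu
  have hne {x : V} (hx : c x = 2) : x ≠ u := ne_of_apply_ne c (by omega)
  exact ⟨u, x₁, x₂, hx₂₁.symm, hne hx₁, hne hx₂, h.isDomSet_pair hu hx₁, h.isDomSet_pair hu hx₂⟩

lemma exists_isExtPrivateNeighbor (h : IsStarK2mLabelling G c) {u a b s t : V} (hu : c u = 1)
    (ha : c a = 2) (hb : c b = 2) (hab : a ≠ b) (hst : (c s : ℕ) + 1 = c t) :
    ∃ x, (x = a ∨ x = b) ∧
      (IsExtPrivateNeighbor G {u, x} s t ∨ IsExtPrivateNeighbor G {u, x} t s) := by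
  have hnadj {v w : V} (hvw : (c v : ℕ) + 1 ≠ c w ∧ (c w : ℕ) + 1 ≠ c v) : ¬ G.Adj v w := by
    rw [h.adj_iff]
    omega
  have ht := (c t).isLt
  obtain hs0 | hs1 | hs2 : (c s : ℕ) = 0 ∨ (c s : ℕ) = 1 ∨ (c s : ℕ) = 2 := by omega
  · obtain rfl : t = u := h.eq_of_label_eq_one (by omega) hu
    refine ⟨a, Or.inl rfl, Or.inr (isExtPrivateNeighbor_pair ?_ ?_ (hnadj (by omega)))⟩
    exacts [ne_of_apply_ne c (by omega), ne_of_apply_ne c (by omega)]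
  · obtain rfl : s = u := h.eq_of_label_eq_one (by omega) hu
    by_cases hta : t = a
    · refine ⟨b, Or.inr rfl, Or.inl (isExtPrivateNeighbor_pair ?_ (hta ▸ hab) (hnadj (by omega)))⟩
      exact ne_of_apply_ne c (by omega)
    · refine ⟨a, Or.inl rfl, Or.inl (isExtPrivateNeighbor_pair ?_ hta (hnadj (by omega)))⟩
      exact ne_of_apply_ne c (by omega)
  · refine ⟨s, h.eq_or_eq_of_label_eq_two hab ha hb (by omega), Or.inl ?_⟩
    rw [Set.pair_comm]
    refine isExtPrivateNeighbor_pair ?_ ?_ (hnadj (by omega))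
    exacts [ne_of_apply_ne c (by omega), ne_of_apply_ne c (by omega)]

lemma isForkCritical (h : IsStarK2mLabelling G c) : IsForkCritical G := by
  rintro e he ⟨u, a, b, hF⟩
  induction e using Sym2.ind with | _ p q => ?_
  have ha := h.label_of_isDomSet_pair (hF.isDomSet_left.mono (G.deleteEdges_le _))
  have hb := h.label_of_isDomSet_pair (hF.isDomSet_right.mono (G.deleteEdges_le _))
  have hu : c u = 1 := by
    by_contra hu
    exact hF.ne (h.eq_of_label_eq_one (by omega) (by omega))
  have hnot {x s t : V} (hx : x = a ∨ x = b) (hst : s(s, t) = s(p, q))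
      (hpriv : IsExtPrivateNeighbor G {u, x} s t) : False := by
    obtain rfl | rfl := hx
    · exact hpriv.not_isDomSet_deleteEdges (hst ▸ hF.isDomSet_left)
    · exact hpriv.not_isDomSet_deleteEdges (hst ▸ hF.isDomSet_right)
  rcases h.adj_iff.1 he with hpq | hqp
  · obtain ⟨x, hx, hpriv | hpriv⟩ :=
      h.exists_isExtPrivateNeighbor hu (by omega) (by omega) hF.ne hpq
    exacts [hnot hx rfl hpriv, hnot hx Sym2.eq_swap hpriv]
  · obtain ⟨x, hx, hpriv | hpriv⟩ :=
      h.exists_isExtPrivateNeighbor hu (by omega) (by omega) hF.ne hqp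
    exacts [hnot hx Sym2.eq_swap hpriv, hnot hx rfl hpriv]

lemma of_iso {W : Type*} {H : SimpleGraph W} {d : W → Fin 4} (f : G ≃g H)
    (h : IsStarK2mLabelling H d) : IsStarK2mLabelling G (d ∘ f) := by
  have hpre (i : Fin 4) : ((d ∘ f) ⁻¹' {i}).ncard = (d ⁻¹' {i}).ncard := by
    rw [Set.preimage_comp]
    exact Set.ncard_preimage_of_injective_subset_range f.injective (by simp [f.surjective.range_eq])
  refine ⟨?_, ?_, ?_, ?_, ?_⟩
  · ext a b
    rw [comap_adj, pathGraph_adj, Function.comp_apply, Function.comp_apply, ← h.adj_iff,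
      f.map_adj_iff]
  · exact hpre 0 ▸ h.one_le_ncard_zero
  · exact hpre 1 ▸ h.ncard_one
  · exact hpre 2 ▸ h.ncard_two
  · exact hpre 3 ▸ h.two_le_ncard_three

end IsStarK2mLabelling

open Classical in
noncomputable def forkLabel (G : SimpleGraph V) (u x₁ x₂ v : V) : Fin 4 :=
  if v = u then 1 else if v = x₁ ∨ v = x₂ then 2 else if G.Adj u v then 0 else 3

lemma forkLabel_cases (G : SimpleGraph V) (u x₁ x₂ v : V) :
    (u = v ∧ forkLabel G u x₁ x₂ v = 1) ∨ ((x₁ = v ∨ x₂ = v) ∧ forkLabel G u x₁ x₂ v = 2) ∨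
      (G.Adj u v ∧ v ≠ x₁ ∧ v ≠ x₂ ∧ forkLabel G u x₁ x₂ v = 0) ∨
      (v ≠ u ∧ ¬ G.Adj u v ∧ forkLabel G u x₁ x₂ v = 3) := by
  unfold forkLabel
  split_ifs <;> simp_all [eq_comm]

namespace IsDomFork

variable {u x₁ x₂ : V}

lemma deleteEdges {p q : V} (hF : IsDomFork G u x₁ x₂)
    (h₁ : ¬ IsExtPrivateNeighbor G {u, x₁} p q) (h₁' : ¬ IsExtPrivateNeighbor G {u, x₁} q p)
    (h₂ : ¬ IsExtPrivateNeighbor G {u, x₂} p q) (h₂' : ¬ IsExtPrivateNeighbor G {u, x₂} q p) :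
    IsDomFork (G.deleteEdges {s(p, q)}) u x₁ x₂ :=
  { hF with
    isDomSet_left := hF.isDomSet_left.deleteEdges h₁ h₁'
    isDomSet_right := hF.isDomSet_right.deleteEdges h₂ h₂' }

lemma eq_of_adj_of_adj {a b : V} (hF : IsDomFork G u x₁ x₂) (hc : IsForkCritical G)
    (hua : G.Adj u a) (ha₁ : a ≠ x₁) (ha₂ : a ≠ x₂) (hab : G.Adj a b) : b = u := by
  by_contra hbu
  have hau : a ≠ u := (G.ne_of_adj hua).symm
  refine hc _ hab ⟨u, x₁, x₂, hF.deleteEdges ?_ ?_ ?_ ?_⟩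
  · exact fun h => absurd h.mem (by simp [hau, ha₁])
  · exact fun h => hbu (h.eq_of_adj u (by simp) hua).symm
  · exact fun h => absurd h.mem (by simp [hau, ha₂])
  · exact fun h => hbu (h.eq_of_adj u (by simp) hua).symm

lemma adj_left_of_adj_right (hF : IsDomFork G u x₁ x₂) (hc : IsForkCritical G)
    (hux₂ : G.Adj u x₂) : G.Adj u x₁ := by
  by_contra hux₁
  have hx₂x₁ := hF.isDomSet_right.adj_of_not_adj hF.left_ne hF.ne hux₁
  refine hc _ hux₂ ⟨u, x₁, x₂, hF.deleteEdges ?_ ?_ ?_ ?_⟩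
  · exact fun h => hF.left_ne (h.eq_of_adj x₁ (by simp) hx₂x₁.symm)
  all_goals exact fun h => h.not_mem (by simp)

lemma adj_left_or_adj_right (hF : IsDomFork G u x₁ x₂) (hc : IsForkCritical G)
    (hG : G.Connected) : G.Adj u x₁ ∨ G.Adj u x₂ := by
  by_contra! hux
  -- otherwise `N[u]` is closed under adjacency, its vertices other than `u` being leaves
  have hclosed (a b : V) (hab : G.Adj a b) (ha : a = u ∨ G.Adj u a) : b = u ∨ G.Adj u b := by
    obtain rfl | hua := ha
    · exact Or.inr hab
    · exact Or.inl (hF.eq_of_adj_of_adj hc hua (fun h => hux.1 (h ▸ hua))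
        (fun h => hux.2 (h ▸ hua)) hab)
  have hreach (v : V) (huv : Relation.ReflTransGen G.Adj u v) : v = u ∨ G.Adj u v := by
    induction huv with
    | refl => exact Or.inl rfl
    | tail _ hbc ih => exact hclosed _ _ hbc ih
  have hx₁ := hreach x₁ ((reachable_iff_reflTransGen u x₁).1 (hG.preconnected u x₁))
  exact hx₁.elim hF.left_ne hux.1

lemma adj_left (hF : IsDomFork G u x₁ x₂) (hc : IsForkCritical G) (hG : G.Connected) :
    G.Adj u x₁ :=
  (hF.adj_left_or_adj_right hc hG).elim id (hF.adj_left_of_adj_right hc)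

lemma adj_right (hF : IsDomFork G u x₁ x₂) (hc : IsForkCritical G) (hG : G.Connected) :
    G.Adj u x₂ :=
  hF.symm.adj_left hc hG

lemma not_adj (hF : IsDomFork G u x₁ x₂) (hc : IsForkCritical G) (hG : G.Connected) :
    ¬ G.Adj x₁ x₂ := by
  intro hx
  refine hc _ hx ⟨u, x₁, x₂, hF.deleteEdges ?_ ?_ ?_ ?_⟩
  · exact fun h => hF.left_ne (h.eq_of_adj u (by simp) (hF.adj_right hc hG)).symm
  · exact fun h => h.not_mem (by simp)
  · exact fun h => h.not_mem (by simp)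
  · exact fun h => hF.right_ne (h.eq_of_adj u (by simp) (hF.adj_left hc hG)).symm

lemma adj_left_of_not_adj {v : V} (hF : IsDomFork G u x₁ x₂) (hc : IsForkCritical G)
    (hG : G.Connected) (hvu : v ≠ u) (hv : ¬ G.Adj u v) : G.Adj x₁ v :=
  hF.isDomSet_left.adj_of_not_adj hvu (fun h => hv (h ▸ hF.adj_left hc hG)) hv

lemma adj_right_of_not_adj {v : V} (hF : IsDomFork G u x₁ x₂) (hc : IsForkCritical G)
    (hG : G.Connected) (hvu : v ≠ u) (hv : ¬ G.Adj u v) : G.Adj x₂ v :=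
  hF.symm.adj_left_of_not_adj hc hG hvu hv

lemma not_adj_of_not_adj {v w : V} (hF : IsDomFork G u x₁ x₂) (hc : IsForkCritical G)
    (hG : G.Connected) (hvu : v ≠ u) (hv : ¬ G.Adj u v) (hwu : w ≠ u) (hw : ¬ G.Adj u w) :
    ¬ G.Adj v w := by
  have hv₁ : v ≠ x₁ := fun h => hv (h ▸ hF.adj_left hc hG)
  have hv₂ : v ≠ x₂ := fun h => hv (h ▸ hF.adj_right hc hG)
  have hw₁ : w ≠ x₁ := fun h => hw (h ▸ hF.adj_left hc hG)
  have hw₂ : w ≠ x₂ := fun h => hw (h ▸ hF.adj_right hc hG)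
  intro hvw
  refine hc _ hvw ⟨u, x₁, x₂, hF.deleteEdges ?_ ?_ ?_ ?_⟩
  · exact fun h => absurd h.mem (by simp [hvu, hv₁])
  · exact fun h => absurd h.mem (by simp [hwu, hw₁])
  · exact fun h => absurd h.mem (by simp [hvu, hv₂])
  · exact fun h => absurd h.mem (by simp [hwu, hw₂])

/-- If `y₀` were the only vertex outside `N[u]`, then `(u, x₁, y₀)` would be a fork surviving the
deletion of `x₂ y₀`. -/
lemma exists_ne_not_adj {y₀ : V} (hF : IsDomFork G u x₁ x₂) (hc : IsForkCritical G)
    (hG : G.Connected) (hy₀u : y₀ ≠ u) (hy₀ : ¬ G.Adj u y₀) :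
    ∃ y₁, y₁ ≠ y₀ ∧ y₁ ≠ u ∧ ¬ G.Adj u y₁ := by
  by_contra! hY
  have hy₀₁ : y₀ ≠ x₁ := fun h => hy₀ (h ▸ hF.adj_left hc hG)
  have hy₀₂ : y₀ ≠ x₂ := fun h => hy₀ (h ▸ hF.adj_right hc hG)
  have hdom : IsDomSet G {u, y₀} := fun v => by
    by_cases hvu : v = u
    · exact Or.inl (by simp [hvu])
    by_cases hvy : v = y₀
    · exact Or.inl (by simp [hvy])
    exact Or.inr ⟨u, by simp, hY v hvy hvu⟩
  refine hc s(x₂, y₀) (hF.adj_right_of_not_adj hc hG hy₀u hy₀)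
    ⟨u, x₁, y₀, ⟨hy₀₁.symm, hF.left_ne, hy₀u, ?_, ?_⟩⟩
  · refine hF.isDomSet_left.deleteEdges ?_ ?_
    · exact fun h => absurd h.mem (by simp [hF.right_ne, hF.ne.symm])
    · exact fun h => absurd h.mem (by simp [hy₀u, hy₀₁])
  · refine hdom.deleteEdges ?_ ?_
    · exact fun h => absurd h.mem (by simp [hF.right_ne, hy₀₂.symm])
    · exact fun h => hy₀u.symm (h.eq_of_adj u (by simp) (hF.adj_right hc hG))

/-- Without a leaf at `u`, every `{x₂, y}` with `y ∉ N[u]` dominates, so `(x₂, y₀, y₁)` would be a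
fork surviving the deletion of `u x₁`. -/
lemma exists_leaf {y₀ y₁ : V} (hF : IsDomFork G u x₁ x₂) (hc : IsForkCritical G)
    (hG : G.Connected) (hy : y₀ ≠ y₁) (hy₀u : y₀ ≠ u) (hy₀ : ¬ G.Adj u y₀) (hy₁u : y₁ ≠ u)
    (hy₁ : ¬ G.Adj u y₁) : ∃ l, G.Adj u l ∧ l ≠ x₁ ∧ l ≠ x₂ := by
  by_contra! hL
  have hdom (y : V) (hyu : y ≠ u) (hy : ¬ G.Adj u y) :
      IsDomSet (G.deleteEdges {s(u, x₁)}) {x₂, y} := by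
    have hy₁ : y ≠ x₁ := fun h => hy (h ▸ hF.adj_left hc hG)
    have hy₂ : y ≠ x₂ := fun h => hy (h ▸ hF.adj_right hc hG)
    refine IsDomSet.deleteEdges (fun v => ?_) ?_ ?_
    · by_cases hvu : v = u
      · exact Or.inr ⟨x₂, by simp, hvu ▸ (hF.adj_right hc hG).symm⟩
      by_cases hv₁ : v = x₁
      · exact Or.inr ⟨y, by simp, hv₁ ▸ (hF.adj_left_of_not_adj hc hG hyu hy).symm⟩
      by_cases hv : v = x₂ ∨ v = y
      · exact Or.inl hv
      rw [not_or] at hv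
      exact Or.inr ⟨x₂, by simp, hF.adj_right_of_not_adj hc hG hvu fun huv => hv.1 (hL v huv hv₁)⟩
    · exact fun h => absurd h.mem (by simp [hF.right_ne.symm, hyu.symm])
    · exact fun h => absurd h.mem (by simp [hF.ne, hy₁.symm])
  refine hc s(u, x₁) (hF.adj_left hc hG)
    ⟨x₂, y₀, y₁, ⟨hy, ?_, ?_, hdom y₀ hy₀u hy₀, hdom y₁ hy₁u hy₁⟩⟩
  · exact fun h => hy₀ (h ▸ hF.adj_right hc hG)
  · exact fun h => hy₁ (h ▸ hF.adj_right hc hG)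

lemma eq_comap_forkLabel (hF : IsDomFork G u x₁ x₂) (hc : IsForkCritical G)
    (hG : G.Connected) : G = (pathGraph 4).comap (forkLabel G u x₁ x₂) := by
  have hux₁ := hF.adj_left hc hG
  have hux₂ := hF.adj_right hc hG
  have hx₁₂ := hF.not_adj hc hG
  have hleaf {l b : V} (hul : G.Adj u l) (hl₁ : l ≠ x₁) (hl₂ : l ≠ x₂) (hbu : b ≠ u) :
      ¬ G.Adj l b := fun h => hbu (hF.eq_of_adj_of_adj hc hul hl₁ hl₂ h)
  have hx₁Y {y : V} (hyu : y ≠ u) (hy : ¬ G.Adj u y) := hF.adj_left_of_not_adj hc hG hyu hy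
  have hx₂Y {y : V} (hyu : y ≠ u) (hy : ¬ G.Adj u y) := hF.adj_right_of_not_adj hc hG hyu hy
  ext a b
  rw [comap_adj]
  rcases forkLabel_cases G u x₁ x₂ a with
    ⟨rfl, ha⟩ | ⟨rfl | rfl, ha⟩ | ⟨hua, ha₁, ha₂, ha⟩ | ⟨hau, hua, ha⟩ <;>
  rcases forkLabel_cases G u x₁ x₂ b with
    ⟨rfl, hb⟩ | ⟨rfl | rfl, hb⟩ | ⟨hub, hb₁, hb₂, hb⟩ | ⟨hbu, hub, hb⟩ <;>
  simp only [ha, hb] <;> simp [pathGraph_adj]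
  · exact hux₁
  · exact hux₂
  · exact hub
  · exact hub
  · exact hux₁.symm
  · exact hx₁₂
  · exact fun h => hleaf hub hb₁ hb₂ hF.left_ne h.symm
  · exact hx₁Y hbu hub
  · exact hux₂.symm
  · exact fun h => hx₁₂ h.symm
  · exact fun h => hleaf hub hb₁ hb₂ hF.right_ne h.symm
  · exact hx₂Y hbu hub
  · exact hua.symm
  · exact hleaf hua ha₁ ha₂ hF.left_ne
  · exact hleaf hua ha₁ ha₂ hF.right_ne
  · exact hleaf hua ha₁ ha₂ (G.ne_of_adj hub).symm
  · exact hleaf hua ha₁ ha₂ hbu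
  · exact fun h => hua h.symm
  · exact (hx₁Y hau hua).symm
  · exact (hx₂Y hau hua).symm
  · exact fun h => hleaf hub hb₁ hb₂ hau h.symm
  · exact hF.not_adj_of_not_adj hc hG hau hua hbu hub

lemma exists_isStarK2mLabelling [Finite V] (hF : IsDomFork G u x₁ x₂) (hc : IsForkCritical G)
    (hG : G.Connected) (h1 : ¬ HasSubsingletonDomSet G) : ∃ c, IsStarK2mLabelling G c := by
  obtain ⟨y₀, hy₀u, hy₀⟩ : ∃ y, y ≠ u ∧ ¬ G.Adj u y := by
    by_contra! hN
    refine h1 ⟨{u}, Set.subsingleton_singleton, fun v => ?_⟩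
    by_cases hvu : v = u
    exacts [Or.inl hvu, Or.inr ⟨u, rfl, hN v hvu⟩]
  obtain ⟨y₁, hy, hy₁u, hy₁⟩ := hF.exists_ne_not_adj hc hG hy₀u hy₀
  obtain ⟨l, hl, hl₁, hl₂⟩ := hF.exists_leaf hc hG (Ne.symm hy) hy₀u hy₀ hy₁u hy₁
  have hux₁ := hF.adj_left hc hG
  have hux₂ := hF.adj_right hc hG
  refine ⟨forkLabel G u x₁ x₂, hF.eq_comap_forkLabel hc hG, ?_, ?_, ?_, ?_⟩
  · refine Nat.one_le_iff_ne_zero.2 (Set.ncard_ne_zero_of_mem (a := l) ?_)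
    simp [forkLabel, (G.ne_of_adj hl).symm, hl₁, hl₂, hl]
  · rw [Set.ncard_eq_one]
    refine ⟨u, Set.ext fun v => ?_⟩
    simp only [Set.mem_preimage, Set.mem_singleton_iff, forkLabel]
    split_ifs <;> simp_all
  · rw [← Set.ncard_pair hF.ne]
    congr 1
    ext v
    simp only [Set.mem_preimage, Set.mem_singleton_iff, Set.mem_insert_iff, forkLabel]
    split_ifs <;> simp_all [hF.left_ne.symm, hF.right_ne.symm]
  · have hy₀₁ : y₀ ≠ x₁ := fun h => hy₀ (h ▸ hux₁)
    have hy₀₂ : y₀ ≠ x₂ := fun h => hy₀ (h ▸ hux₂)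
    have hy₁₁ : y₁ ≠ x₁ := fun h => hy₁ (h ▸ hux₁)
    have hy₁₂ : y₁ ≠ x₂ := fun h => hy₁ (h ▸ hux₂)
    rw [← Set.ncard_pair hy.symm]
    refine Set.ncard_le_ncard (Set.pair_subset ?_ ?_) (Set.toFinite _)
    · simp [forkLabel, hy₀u, hy₀₁, hy₀₂, hy₀]
    · simp [forkLabel, hy₁u, hy₁₁, hy₁₂, hy₁]

end IsDomFork

lemma nonempty_iso_comap {T W : Type*} [Finite V] [Finite W] (K : SimpleGraph T) (c : V → T)
    (d : W → T) (hcd : ∀ t, (c ⁻¹' {t}).ncard = (d ⁻¹' {t}).ncard) :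
    Nonempty (K.comap c ≃g K.comap d) := by
  have he (t : T) : Nonempty ({v // c v = t} ≃ {w // d w = t}) := by
    rw [← Finite.card_eq]
    exact (Nat.card_coe_set_eq _).trans ((hcd t).trans (Nat.card_coe_set_eq _).symm)
  refine ⟨⟨Equiv.ofFiberEquiv fun t => (he t).some, fun {a b} => ?_⟩⟩
  simp only [comap_adj, Equiv.ofFiberEquiv_map]

def starK2mLabel (n m : ℕ) : Unit ⊕ (Fin n ⊕ (Fin 2 ⊕ Fin m)) → Fin 4 :=
  Sum.elim (fun _ => 1) (Sum.elim (fun _ => 0) (Sum.elim (fun _ => 2) (fun _ => 3)))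

lemma starK2m_eq_comap (n m : ℕ) :
    StarK2m n m = (pathGraph 4).comap (starK2mLabel n m) := by
  ext a b
  rcases a with _ | _ | _ | _ <;> rcases b with _ | _ | _ | _ <;>
    simp [StarK2m, starK2mLabel, pathGraph_adj]

lemma ncard_preimage_starK2mLabel (n m : ℕ) (i : Fin 4) :
    (starK2mLabel n m ⁻¹' {i}).ncard = ![n, 1, 2, m] i := by
  rw [← Nat.card_coe_set_eq, Set.preimage, Nat.card_eq_fintype_card, Fintype.card_subtype,
    Finset.card_filter]
  simp only [Fintype.sum_sum_type, starK2mLabel]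
  fin_cases i <;> simp

lemma isStarK2mLabelling_starK2m {n m : ℕ} (hn : 1 ≤ n) (hm : 2 ≤ m) :
    IsStarK2mLabelling (StarK2m n m) (starK2mLabel n m) := by
  refine ⟨starK2m_eq_comap n m, ?_, ?_, ?_, ?_⟩ <;> simp [ncard_preimage_starK2mLabel, hn, hm]

lemma exists_isStarK2mLabelling_iff [Finite V] : (∃ c, IsStarK2mLabelling G c) ↔
    ∃ n m : ℕ, 1 ≤ n ∧ 2 ≤ m ∧ Nonempty (G ≃g StarK2m n m) := by
  constructor
  · rintro ⟨c, h⟩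
    refine ⟨_, _, h.one_le_ncard_zero, h.two_le_ncard_three, ?_⟩
    rw [h.eq_comap, starK2m_eq_comap]
    refine nonempty_iso_comap _ _ _ fun i => ?_
    fin_cases i <;> simp [ncard_preimage_starK2mLabel, h.ncard_one, h.ncard_two]
  · rintro ⟨n, m, hn, hm, ⟨f⟩⟩
    exact ⟨_, (isStarK2mLabelling_starK2m hn hm).of_iso f⟩

end MBD

/-- A connected (finite) graph `G` is `2`-`γ_MB`-critical if and only if `G` is isomorphic to
the graph obtained from a star `K_{1,n}` (`n ≥ 1`) with centre `u` and a disjoint `K_{2,m}`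
(`m ≥ 2`) with bipartition `{x_1, x_2}`, `{y_1, …, y_m}` by adding the edges `u x_1`, `u x_2`. -/
theorem two_gammaMB_critical_iff {V : Type*} [Fintype V]
    (G : SimpleGraph V) (hG : G.Connected) :
    (gammaMB G = 2 ∧ ∀ e ∈ G.edgeSet, gammaMB G < gammaMB (G.deleteEdges {e})) ↔
      ∃ n m : ℕ, 1 ≤ n ∧ 2 ≤ m ∧ Nonempty (G ≃g StarK2m n m) := by
  rw [gammaMB_two_critical_iff, ← exists_isStarK2mLabelling_iff]
  constructor
  · rintro ⟨h1, ⟨u, x₁, x₂, hF⟩, hc⟩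
    exact hF.exists_isStarK2mLabelling hc hG h1
  · rintro ⟨c, h⟩
    exact ⟨h.not_hasSubsingletonDomSet, h.exists_isDomFork, h.isForkCritical⟩
end

section
/- If G is a connected 2-γ'_MB-critical graph, then G has at least 5 vertices. -/
open MBD

namespace MBDAux
open MBD

variable {V : Type*} [DecidableEq V]

def domP (adj : V → V → Prop) (D : Finset V) : Prop :=
  ∀ v, v ∈ D ∨ ∃ u ∈ D, adj u v

def dwinF (adj : V → V → Prop) : ℕ → Finset V → Finset V → Prop
  | 0, D, _ => domP adj D
  | (k+1), D, S => domP adj D ∨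
      ∃ v, v ∉ D ∪ S ∧
        (domP adj (insert v D) ∨
          ((∃ w, w ∉ insert v D ∪ S) ∧
            ∀ w, w ∉ insert v D ∪ S → dwinF adj k (insert v D) (insert w S)))

def dwinSF (adj : V → V → Prop) (k : ℕ) (D S : Finset V) : Prop :=
  domP adj D ∨ ((∃ w, w ∉ D ∪ S) ∧ ∀ w, w ∉ D ∪ S → dwinF adj k D (insert w S))

variable [Fintype V]

instance (adj : V → V → Prop) [DecidableRel adj] (D : Finset V) : Decidable (domP adj D) := by
  unfold domP; infer_instance

def decDwinF (adj : V → V → Prop) [DecidableRel adj] :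
    ∀ k (D S : Finset V), Decidable (dwinF adj k D S)
  | 0, D, _ => inferInstanceAs (Decidable (domP adj D))
  | (k+1), D, S => by
      haveI : ∀ D S, Decidable (dwinF adj k D S) := decDwinF adj k
      exact inferInstanceAs (Decidable (_ ∨ _))

instance (adj : V → V → Prop) [DecidableRel adj] (k : ℕ) (D S : Finset V) :
    Decidable (dwinF adj k D S) := decDwinF adj k D S

instance (adj : V → V → Prop) [DecidableRel adj] (k : ℕ) (D S : Finset V) :
    Decidable (dwinSF adj k D S) := by unfold dwinSF; infer_instance

open MBD

variable {V : Type*} [DecidableEq V]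

lemma isDomSet_coe (G : SimpleGraph V) (D : Finset V) : IsDomSet G ↑D ↔ domP G.Adj D :=
  Iff.rfl

lemma dwin_coe (G : SimpleGraph V) :
    ∀ (k : ℕ) (D S : Finset V), DWin G k ↑D ↑S ↔ dwinF G.Adj k D S := by
  intro k
  induction k with
  | zero => intro D S; exact Iff.rfl
  | succ k ih =>
      intro D S
      show (IsDomSet G ↑D ∨ _) ↔ _
      rw [dwinF]
      simp only [← Finset.coe_union, ← Finset.coe_insert, Finset.mem_coe, isDomSet_coe, ih]

lemma dwinS_coe (G : SimpleGraph V) (k : ℕ) (D S : Finset V) :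
    DWinS G k ↑D ↑S ↔ dwinSF G.Adj k D S := by
  unfold DWinS dwinSF
  simp only [← Finset.coe_union, ← Finset.coe_insert, Finset.mem_coe, isDomSet_coe,
    dwin_coe]

section transfer

variable {W : Type*} [DecidableEq W] (σ : V ≃ W) {adj : V → V → Prop} {adj' : W → W → Prop}

lemma mem_image_equiv' (D : Finset V) (v : V) : σ v ∈ D.image σ ↔ v ∈ D := by
  simp [Finset.mem_image]

lemma domP_map (h : ∀ a b, adj a b ↔ adj' (σ a) (σ b)) (D : Finset V)
    (hd : domP adj D) : domP adj' (D.image σ) := by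
  intro w
  rcases hd (σ.symm w) with hv | ⟨u, hu, hadj⟩
  · left
    simpa using Finset.mem_image_of_mem σ hv
  · right
    refine ⟨σ u, Finset.mem_image_of_mem σ hu, ?_⟩
    have := (h u (σ.symm w)).1 hadj
    simpa using this

lemma dwinF_map (h : ∀ a b, adj a b ↔ adj' (σ a) (σ b)) :
    ∀ k (D S : Finset V), dwinF adj k D S → dwinF adj' k (D.image σ) (S.image σ) := by
  intro k
  induction k with
  | zero => intro D S hd; exact domP_map σ h D hd
  | succ k ih =>
      intro D S hd
      rw [dwinF] at hd ⊢
      rcases hd with hd | ⟨v, hv, hd⟩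
      · exact Or.inl (domP_map σ h D hd)
      · refine Or.inr ⟨σ v, ?_, ?_⟩
        · rw [← Finset.image_union]
          simpa [mem_image_equiv'] using hv
        · rw [← Finset.image_insert]
          rcases hd with hd | ⟨⟨w0, hw0⟩, hall⟩
          · exact Or.inl (domP_map σ h _ hd)
          · refine Or.inr ⟨⟨σ w0, ?_⟩, ?_⟩
            · rw [← Finset.image_union]
              simpa [mem_image_equiv'] using hw0
            · intro w' hw'
              have hmem : σ.symm w' ∉ insert v D ∪ S := by
                intro hc
                apply hw'
                have := Finset.mem_image_of_mem σ hc
                simp only [Finset.image_union] at this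
                simpa using this
              have := ih _ _ (hall _ hmem)
              rw [Finset.image_insert] at this
              simpa using this

lemma dwinSF_map (h : ∀ a b, adj a b ↔ adj' (σ a) (σ b)) (k : ℕ) (D S : Finset V)
    (hd : dwinSF adj k D S) : dwinSF adj' k (D.image σ) (S.image σ) := by
  rcases hd with hd | ⟨⟨w0, hw0⟩, hall⟩
  · exact Or.inl (domP_map σ h D hd)
  · refine Or.inr ⟨⟨σ w0, ?_⟩, ?_⟩
    · rw [← Finset.image_union]
      simpa [mem_image_equiv'] using hw0
    · intro w' hw'
      have hmem : σ.symm w' ∉ D ∪ S := by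
        intro hc
        apply hw'
        have := Finset.mem_image_of_mem σ hc
        simp only [Finset.image_union] at this
        simpa using this
      have := dwinF_map σ h k D _ (hall _ hmem)
      rw [Finset.image_insert] at this
      simpa using this

lemma dwinSF_empty_iff (h : ∀ a b, adj a b ↔ adj' (σ a) (σ b)) (k : ℕ) :
    dwinSF adj k ∅ ∅ ↔ dwinSF adj' k ∅ ∅ := by
  constructor
  · intro hd
    simpa using dwinSF_map σ h k ∅ ∅ hd
  · intro hd
    have h' : ∀ a b, adj' a b ↔ adj (σ.symm a) (σ.symm b) := by
      intro a b
      rw [h (σ.symm a) (σ.symm b)]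
      simp
    simpa using dwinSF_map σ.symm h' k ∅ ∅ hd

end transfer
end MBDAux

namespace MBDAux
open MBD

def deladj {n : ℕ} (adj : Fin n → Fin n → Prop) (a b x y : Fin n) : Prop :=
  adj x y ∧ ¬(x = a ∧ y = b) ∧ ¬(x = b ∧ y = a)

def adjT {n m : ℕ} (idx : Fin n → Fin n → Fin m) (f : Fin m → Bool) (i j : Fin n) : Prop :=
  i ≠ j ∧ f (idx i j) = true

instance {n m : ℕ} (idx : Fin n → Fin n → Fin m) (f : Fin m → Bool) :
    DecidableRel (adjT idx f) := fun _ _ => instDecidableAnd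

instance {n : ℕ} (adj : Fin n → Fin n → Prop) [DecidableRel adj] (a b : Fin n) :
    DecidableRel (deladj adj a b) := fun _ _ => instDecidableAnd

def connHyp {n : ℕ} (adj : Fin n → Fin n → Prop) : Prop :=
  ∀ A : Finset (Fin n), A.Nonempty → A ≠ Finset.univ → ∃ x ∈ A, ∃ y, y ∉ A ∧ adj x y

instance {n : ℕ} (adj : Fin n → Fin n → Prop) [DecidableRel adj] :
    Decidable (connHyp adj) := by unfold connHyp; infer_instance

lemma gamma_facts {V : Type*} (G : SimpleGraph V) (h : gammaMB' G = 2) :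
    DWinS G 2 ∅ ∅ ∧ ¬ DWinS G 1 ∅ ∅ := by
  have hne : {k : ℕ | DWinS G k ∅ ∅}.Nonempty := by
    by_contra h'
    rw [Set.not_nonempty_iff_eq_empty] at h'
    rw [gammaMB', h', Set.image_empty, sInf_empty] at h
    exact (by simp : (⊤ : ℕ∞) ≠ 2) h
  have hmem : sInf {k : ℕ | DWinS G k ∅ ∅} ∈ {k : ℕ | DWinS G k ∅ ∅} := Nat.sInf_mem hne
  have hub : (2 : ℕ∞) ≤ ↑(sInf {k : ℕ | DWinS G k ∅ ∅}) := by
    rw [← h, gammaMB']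
    exact sInf_le ⟨_, hmem, rfl⟩
  have hlb : (↑(sInf {k : ℕ | DWinS G k ∅ ∅}) : ℕ∞) ≤ 2 := by
    rw [← h, gammaMB']
    apply le_sInf
    rintro b ⟨k, hk, rfl⟩
    exact_mod_cast Nat.sInf_le hk
  have h2' : sInf {k : ℕ | DWinS G k ∅ ∅} = 2 := by
    have h0 : (↑(sInf {k : ℕ | DWinS G k ∅ ∅}) : ℕ∞) = ((2 : ℕ) : ℕ∞) := by
      rw [le_antisymm hlb hub]; simp
    exact_mod_cast h0
  constructor
  · exact h2' ▸ hmem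
  · intro hd
    have h1 : sInf {k : ℕ | DWinS G k ∅ ∅} ≤ 1 := Nat.sInf_le hd
    omega
lemma not_dwinS_del {V : Type*} (G H : SimpleGraph V)
    (hlt : gammaMB' G < gammaMB' H) (h : gammaMB' G = 2) : ¬ DWinS H 2 ∅ ∅ := by
  intro hd
  have hle : gammaMB' H ≤ ((2 : ℕ) : ℕ∞) := by
    rw [gammaMB']
    exact sInf_le ⟨2, hd, rfl⟩
  rw [h] at hlt
  have : (2 : ℕ∞) < 2 := lt_of_lt_of_le hlt (by simpa using hle)
  simp at this

lemma connHyp_of_connected {V : Type*} {n : ℕ} (σ : V ≃ Fin n) (G : SimpleGraph V)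
    (hG : G.Connected) (adj' : Fin n → Fin n → Prop)
    (h : ∀ a b, G.Adj a b ↔ adj' (σ a) (σ b)) : connHyp adj' := by
  intro A hA hAu
  obtain ⟨i, hi⟩ := hA
  obtain ⟨j, hj⟩ : ∃ j, j ∉ A := by
    by_contra h'
    push_neg at h'
    exact hAu (Finset.eq_univ_iff_forall.mpr h')
  obtain ⟨w⟩ := hG.preconnected (σ.symm i) (σ.symm j)
  have hcross : ∀ {a b : V}, G.Walk a b → σ a ∈ A → σ b ∉ A →
      ∃ x ∈ A, ∃ y, y ∉ A ∧ adj' x y := by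
    intro a b w
    induction w with
    | nil => intro ha hb; exact absurd ha hb
    | @cons u x b' hadj p ih =>
        intro ha hb
        by_cases hx : σ x ∈ A
        · exact ih hx hb
        · exact ⟨σ u, ha, σ x, hx, (h u x).1 hadj⟩
  exact hcross w (by simpa using hi) (by simpa using hj)

lemma master {V : Type*} [Fintype V] {n m : ℕ}
    (σ : V ≃ Fin n) (idx : Fin n → Fin n → Fin m) (pf ps : Fin m → Fin n)
    (hidx : ∀ i j : Fin n, i ≠ j →
      (pf (idx i j) = i ∧ ps (idx i j) = j) ∨ (pf (idx i j) = j ∧ ps (idx i j) = i))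
    (hdec : ∀ f : Fin m → Bool, connHyp (adjT idx f) → dwinSF (adjT idx f) 2 ∅ ∅ →
      ¬ dwinSF (adjT idx f) 1 ∅ ∅ →
      (∀ a b, adjT idx f a b → ¬ dwinSF (deladj (adjT idx f) a b) 2 ∅ ∅) → False)
    (G : SimpleGraph V) (hG : G.Connected) (h2 : gammaMB' G = 2)
    (hcrit : ∀ e ∈ G.edgeSet, gammaMB' G < gammaMB' (G.deleteEdges {e})) : False := by
  classical
  set f : Fin m → Bool := fun p => decide (G.Adj (σ.symm (pf p)) (σ.symm (ps p))) with hf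
  have hcorr : ∀ a b : V, G.Adj a b ↔ adjT idx f (σ a) (σ b) := by
    intro a b
    constructor
    · intro hab
      have hne : σ a ≠ σ b := by simp [G.ne_of_adj hab]
      refine ⟨hne, ?_⟩
      rcases hidx _ _ hne with ⟨ha, hb⟩ | ⟨ha, hb⟩
      · simp [hf, ha, hb, hab]
      · simp [hf, ha, hb, hab.symm]
    · rintro ⟨hne, hfv⟩
      rcases hidx _ _ hne with ⟨ha, hb⟩ | ⟨ha, hb⟩
      · simp only [hf, ha, hb, Equiv.symm_apply_apply, decide_eq_true_eq] at hfv
        exact hfv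
      · simp only [hf, ha, hb, Equiv.symm_apply_apply, decide_eq_true_eq] at hfv
        exact hfv.symm
  have hGuv : ∀ u v : Fin n, G.Adj (σ.symm u) (σ.symm v) ↔ adjT idx f u v := by
    intro u v
    have := hcorr (σ.symm u) (σ.symm v)
    simpa using this
  have hA := gamma_facts G h2
  apply hdec f
  · exact connHyp_of_connected σ G hG _ hcorr
  · have h1 := hA.1
    rw [show (∅ : Set V) = (↑(∅ : Finset V) : Set V) by simp] at h1
    rw [dwinS_coe] at h1
    exact (dwinSF_empty_iff σ hcorr 2).1 h1
  · intro hd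
    have h1 := (dwinSF_empty_iff σ hcorr 1).2 hd
    rw [← dwinS_coe, Finset.coe_empty] at h1
    exact hA.2 h1
  · intro a b hab hdel
    have hGab : G.Adj (σ.symm a) (σ.symm b) := (hGuv a b).2 hab
    have hmem : s(σ.symm a, σ.symm b) ∈ G.edgeSet := hGab
    have hnd := not_dwinS_del G _ (hcrit _ hmem) h2
    have hcorr' : ∀ u v : Fin n,
        deladj (adjT idx f) a b u v ↔
          (G.deleteEdges {s(σ.symm a, σ.symm b)}).Adj (σ.symm u) (σ.symm v) := by
      intro u v
      simp only [deladj, SimpleGraph.deleteEdges_adj, Set.mem_singleton_iff, Sym2.eq_iff,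
        hGuv, σ.symm.injective.eq_iff]
      tauto
    have h1 := (dwinSF_empty_iff σ.symm hcorr' 2).1 hdel
    rw [← dwinS_coe, Finset.coe_empty] at h1
    exact hnd h1

end MBDAux

namespace MBDAux
open MBD

def checkP {n m : ℕ} (idx : Fin n → Fin n → Fin m) (f : Fin m → Bool) : Prop :=
  ¬(connHyp (adjT idx f) ∧ dwinSF (adjT idx f) 2 ∅ ∅ ∧ ¬ dwinSF (adjT idx f) 1 ∅ ∅ ∧
    (∀ a b, adjT idx f a b → ¬ dwinSF (deladj (adjT idx f) a b) 2 ∅ ∅))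

instance {n m : ℕ} (idx : Fin n → Fin n → Fin m) (f : Fin m → Bool) :
    Decidable (checkP idx f) := by unfold checkP; infer_instance

def idx1 : Fin 1 → Fin 1 → Fin 1 := fun _ _ => 0
def pf1 : Fin 1 → Fin 1 := ![0]
def ps1 : Fin 1 → Fin 1 := ![0]
def idx2 : Fin 2 → Fin 2 → Fin 1 := fun _ _ => 0
def pf2 : Fin 1 → Fin 2 := ![0]
def ps2 : Fin 1 → Fin 2 := ![1]
def idx3 : Fin 3 → Fin 3 → Fin 3 := ![![0,0,1],![0,0,2],![1,2,0]]
def pf3 : Fin 3 → Fin 3 := ![0,0,1]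
def ps3 : Fin 3 → Fin 3 := ![1,2,2]
def idx4 : Fin 4 → Fin 4 → Fin 6 := ![![0,0,1,2],![0,0,3,4],![1,3,0,5],![2,4,5,0]]
def pf4 : Fin 6 → Fin 4 := ![0,0,0,1,1,2]
def ps4 : Fin 6 → Fin 4 := ![1,2,3,2,3,3]

theorem hidx1 : ∀ i j : Fin 1, i ≠ j →
    (pf1 (idx1 i j) = i ∧ ps1 (idx1 i j) = j) ∨ (pf1 (idx1 i j) = j ∧ ps1 (idx1 i j) = i) := by
  decide
theorem hidx2 : ∀ i j : Fin 2, i ≠ j →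
    (pf2 (idx2 i j) = i ∧ ps2 (idx2 i j) = j) ∨ (pf2 (idx2 i j) = j ∧ ps2 (idx2 i j) = i) := by
  decide
theorem hidx3 : ∀ i j : Fin 3, i ≠ j →
    (pf3 (idx3 i j) = i ∧ ps3 (idx3 i j) = j) ∨ (pf3 (idx3 i j) = j ∧ ps3 (idx3 i j) = i) := by
  decide
theorem hidx4 : ∀ i j : Fin 4, i ≠ j →
    (pf4 (idx4 i j) = i ∧ ps4 (idx4 i j) = j) ∨ (pf4 (idx4 i j) = j ∧ ps4 (idx4 i j) = i) := by
  decide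

set_option maxHeartbeats 1000000 in
set_option maxRecDepth 100000 in
theorem hdecb1 : ∀ b0 : Bool, checkP idx1 ![b0] := by decide
set_option maxHeartbeats 1000000 in
set_option maxRecDepth 100000 in
theorem hdecb2 : ∀ b0 : Bool, checkP idx2 ![b0] := by decide
set_option maxHeartbeats 4000000 in
set_option maxRecDepth 100000 in
theorem hdecb3 : ∀ b0 b1 b2 : Bool, checkP idx3 ![b0,b1,b2] := by decide
set_option maxHeartbeats 100000000 in
set_option maxRecDepth 1000000 in
theorem hdecb4 : ∀ b0 b1 b2 b3 b4 b5 : Bool, checkP idx4 ![b0,b1,b2,b3,b4,b5] := by decide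

theorem hdec1 (f : Fin 1 → Bool) : checkP idx1 f := by
  have hf : f = ![f 0] := by funext i; fin_cases i <;> rfl
  rw [hf]; exact hdecb1 (f 0)
theorem hdec2 (f : Fin 1 → Bool) : checkP idx2 f := by
  have hf : f = ![f 0] := by funext i; fin_cases i <;> rfl
  rw [hf]; exact hdecb2 (f 0)
theorem hdec3 (f : Fin 3 → Bool) : checkP idx3 f := by
  have hf : f = ![f 0, f 1, f 2] := by funext i; fin_cases i <;> rfl
  rw [hf]; exact hdecb3 (f 0) (f 1) (f 2)
theorem hdec4 (f : Fin 6 → Bool) : checkP idx4 f := by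
  have hf : f = ![f 0, f 1, f 2, f 3, f 4, f 5] := by funext i; fin_cases i <;> rfl
  rw [hf]; exact hdecb4 (f 0) (f 1) (f 2) (f 3) (f 4) (f 5)

lemma checkP_elim {n m : ℕ} {idx : Fin n → Fin n → Fin m}
    (hc : ∀ f : Fin m → Bool, checkP idx f) :
    ∀ f : Fin m → Bool, connHyp (adjT idx f) → dwinSF (adjT idx f) 2 ∅ ∅ →
      ¬ dwinSF (adjT idx f) 1 ∅ ∅ →
      (∀ a b, adjT idx f a b → ¬ dwinSF (deladj (adjT idx f) a b) 2 ∅ ∅) → False := by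
  intro f h1 h2 h3 h4
  exact hc f ⟨h1, h2, h3, h4⟩

end MBDAux

open MBDAux

/-- If `G` is a connected `2`-`γ'_MB`-critical graph, then `G` has at least `5` vertices. -/
theorem two_gammaMB'_critical_order {V : Type*} [Fintype V]
    (G : SimpleGraph V) (hG : G.Connected)
    (h2 : gammaMB' G = 2)
    (hcrit : ∀ e ∈ G.edgeSet, gammaMB' G < gammaMB' (G.deleteEdges {e})) :
    5 ≤ Fintype.card V := by
  by_contra hlt
  push_neg at hlt
  have hpos : 0 < Fintype.card V := Fintype.card_pos_iff.mpr hG.nonempty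
  interval_cases h : Fintype.card V
  · exact (master (Fintype.equivFinOfCardEq h) idx1 pf1 ps1 hidx1 (checkP_elim hdec1)
      G hG h2 hcrit).elim
  · exact (master (Fintype.equivFinOfCardEq h) idx2 pf2 ps2 hidx2 (checkP_elim hdec2)
      G hG h2 hcrit).elim
  · exact (master (Fintype.equivFinOfCardEq h) idx3 pf3 ps3 hidx3 (checkP_elim hdec3)
      G hG h2 hcrit).elim
  · exact (master (Fintype.equivFinOfCardEq h) idx4 pf4 ps4 hidx4 (checkP_elim hdec4)
      G hG h2 hcrit).elim
end

section
/- If G is a connected 2-γ'_MB-critical graph, then the minimum degree of G is at least 2. -/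
open MBD

section Aux
variable {V : Type*}

lemma dwin_succ (G : SimpleGraph V) : ∀ (k : ℕ) (D S : Set V), DWin G k D S → DWin G (k+1) D S := by
  intro k
  induction k with
  | zero => intro D S h; exact Or.inl h
  | succ n ih =>
    intro D S h
    rcases h with h | ⟨v, hv, h⟩
    · exact Or.inl h
    · refine Or.inr ⟨v, hv, ?_⟩
      rcases h with h | ⟨hex, hall⟩
      · exact Or.inl h
      · exact Or.inr ⟨hex, fun w hw => ih _ _ (hall w hw)⟩

lemma dwin_le (G : SimpleGraph V) {k m : ℕ} (h : k ≤ m) {D S : Set V}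
    (hw : DWin G k D S) : DWin G m D S := by
  obtain ⟨d, rfl⟩ := Nat.exists_eq_add_of_le h
  clear h
  induction d with
  | zero => exact hw
  | succ n ih => exact dwin_succ G _ _ _ ih

lemma dwinS_le (G : SimpleGraph V) {k m : ℕ} (h : k ≤ m) {D S : Set V}
    (hw : DWinS G k D S) : DWinS G m D S := by
  rcases hw with hw | ⟨hex, hall⟩
  · exact Or.inl hw
  · exact Or.inr ⟨hex, fun w hw' => dwin_le G h (hall w hw')⟩

lemma dwin_two_iff (G : SimpleGraph V) (D S : Set V) :
    DWin G 2 D S ↔ (IsDomSet G D ∨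
      ∃ v ∉ D ∪ S, (IsDomSet G (insert v D) ∨
        ((∃ w, w ∉ insert v D ∪ S) ∧
          ∀ w ∉ insert v D ∪ S, DWin G 1 (insert v D) (insert w S)))) := Iff.rfl

lemma dwin_one_iff (G : SimpleGraph V) (D S : Set V) :
    DWin G 1 D S ↔ (IsDomSet G D ∨
      ∃ v ∉ D ∪ S, (IsDomSet G (insert v D) ∨
        ((∃ w, w ∉ insert v D ∪ S) ∧
          ∀ w ∉ insert v D ∪ S, IsDomSet G (insert v D)))) := Iff.rfl

lemma extract1 (G : SimpleGraph V) (D S : Set V) (h : DWin G 1 D S) :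
    IsDomSet G D ∨ ∃ x ∉ D ∪ S, IsDomSet G (insert x D) := by
  rw [dwin_one_iff] at h
  rcases h with h | ⟨x, hx, hin⟩
  · exact Or.inl h
  · refine Or.inr ⟨x, hx, ?_⟩
    rcases hin with h | ⟨⟨w, hw⟩, hallw⟩
    · exact h
    · exact hallw w hw

end Aux


/-- If `G` is a connected `2`-`γ'_MB`-critical graph, then the minimum degree of `G` is at
least `2`. -/
theorem two_gammaMB'_critical_minDegree {V : Type*} [Fintype V]
    (G : SimpleGraph V) [DecidableRel G.Adj] (hG : G.Connected)
    (h2 : gammaMB' G = 2)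
    (hcrit : ∀ e ∈ G.edgeSet, gammaMB' G < gammaMB' (G.deleteEdges {e})) :
    2 ≤ G.minDegree := by
  by_contra hlt
  push_neg at hlt
  have hne : Nonempty V := hG.nonempty
  obtain ⟨v, hv⟩ := G.exists_minimal_degree_vertex
  have hdeg : G.degree v ≤ 1 := by omega
  have hemp : ¬ IsDomSet G (∅ : Set V) := by
    intro h
    rcases h v with h' | ⟨a, ha, -⟩
    · exact h'
    · exact ha
  rcases Nat.le_one_iff_eq_zero_or_eq_one.mp hdeg with h0 | h1
  · -- degree v = 0 : V = {v}, Dominator can never win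
    have hno : ∀ w, ¬ G.Adj v w := by
      intro w hw
      have hmem := (G.mem_neighborFinset v w).mpr hw
      rw [Finset.card_eq_zero.mp h0] at hmem
      simp at hmem
    have hall : ∀ w : V, w = v := by
      intro w
      obtain ⟨p⟩ := hG.preconnected v w
      cases p with
      | nil => rfl
      | cons h _ => exact absurd h (hno _)
    have hDWfail : ∀ k, ¬ DWinS G k ∅ ∅ := by
      intro k hk
      rcases hk with h | ⟨-, hall'⟩
      · exact hemp h
      · have hwin := hall' v (by simp)
        cases k with
        | zero => exact hemp hwin
        | succ n =>
          rcases hwin with h | ⟨d, hd, -⟩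
          · exact hemp h
          · exact hd (by simp [hall d])
    have htop : gammaMB' G = ⊤ := by
      have hS : {k : ℕ | DWinS G k ∅ ∅} = ∅ := Set.eq_empty_iff_forall_notMem.mpr hDWfail
      show sInf _ = ⊤
      rw [hS]
      simp
    rw [htop] at h2
    simp at h2
  · -- degree v = 1 : pendant vertex
    obtain ⟨u, hu⟩ := Finset.card_eq_one.mp (h1 : (G.neighborFinset v).card = 1)
    have hadj : G.Adj v u := by
      rw [← G.mem_neighborFinset, hu]; simp
    have huniq : ∀ z, G.Adj v z → z = u := by
      intro z hz
      have := (G.mem_neighborFinset v z).mpr hz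
      rw [hu] at this
      simpa using this
    have hvu : v ≠ u := G.ne_of_adj hadj
    -- no dominating set avoids both u and v
    have hnodom : ∀ (D : Set V), u ∉ D → v ∉ D → ¬ IsDomSet G D := by
      intro D hu' hv' hD
      rcases hD v with h | ⟨a, ha, hadj'⟩
      · exact hv' h
      · have : a = u := huniq a hadj'.symm
        rw [this] at ha
        exact hu' ha
    by_cases hex : ∃ z, z ≠ u ∧ z ≠ v
    · obtain ⟨z₀, hz₀u, hz₀v⟩ := hex
      -- get DWinS G 2 ∅ ∅ from h2
      have h2' : sInf ((Nat.cast '' {k : ℕ | DWinS G k ∅ ∅}) : Set ℕ∞) = 2 := h2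
      have hlt3 : sInf ((Nat.cast '' {k : ℕ | DWinS G k ∅ ∅}) : Set ℕ∞) < 3 := by
        rw [h2']; norm_num
      obtain ⟨a, ⟨k, hk, rfl⟩, hlta⟩ := sInf_lt_iff.mp hlt3
      have hk2 : k ≤ 2 := by
        have : (k : ℕ∞) < ((3 : ℕ) : ℕ∞) := by exact_mod_cast hlta
        exact Nat.lt_succ_iff.mp (by exact_mod_cast this)
      have hDW2 : DWinS G 2 ∅ ∅ := dwinS_le G hk2 hk
      -- {v} does not dominate (z₀ is missed)
      have hVne2 : ¬ IsDomSet G (insert v ∅) := by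
        intro h
        rcases h z₀ with h' | ⟨a, ha, hadj'⟩
        · exact hz₀v (by simpa using h')
        · have : a = v := by simpa using ha
          subst this
          exact hz₀u (huniq z₀ hadj')
      -- forcing: Staller plays u first
      rcases hDW2 with h | ⟨-, hall⟩
      · exact hemp h
      have hu1 : DWin G 2 ∅ (insert u ∅) := hall u (by simp)
      rw [dwin_two_iff] at hu1
      rcases hu1 with h | ⟨d₁, hd₁, hin⟩
      · exact hemp h
      have hd₁u : d₁ ≠ u := by
        intro h; exact hd₁ (by simp [h])
      rcases hin with h | ⟨⟨w₀, hw₀⟩, hstep⟩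
      · -- {d₁} dominates: then d₁ = v and so V = {u,v}, contradicting z₀
        by_cases hdv : d₁ = v
        · subst hdv
          exact hVne2 h
        · exact hnodom _ (by simp [Ne.symm hd₁u]) (by simp [Ne.symm hdv]) h
      -- d₁ must be v
      have hd₁v : d₁ = v := by
        by_contra hdv
        have hs := hstep v (by simp [Ne.symm hdv, hvu])
        rcases extract1 G _ _ hs with h | ⟨x, hx, hdom⟩
        · exact hnodom _ (by simp [Ne.symm hd₁u]) (by simp [Ne.symm hdv]) h
        · simp only [Set.mem_union, Set.mem_insert_iff, Set.mem_empty_iff_false, or_false,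
            not_or] at hx
          obtain ⟨hx1, hx2, hx3⟩ := hx
          exact hnodom _ (by simp [Ne.symm hx3, Ne.symm hd₁u])
            (by simp [Ne.symm hx2, Ne.symm hdv]) hdom
      rw [hd₁v] at hstep
      -- extract the two "almost universal" vertices
      have getx : ∀ s₂, s₂ ≠ u → s₂ ≠ v →
          ∃ x, x ≠ u ∧ x ≠ v ∧ x ≠ s₂ ∧ IsDomSet G (insert x (insert v ∅)) := by
        intro s₂ hsu hsv
        have hs := hstep s₂ (by simp [hsv, hsu])
        rcases extract1 G _ _ hs with h | ⟨x, hx, hdom⟩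
        · exact (hVne2 h).elim
        · simp only [Set.mem_union, Set.mem_insert_iff, Set.mem_empty_iff_false, or_false,
            not_or] at hx
          obtain ⟨hx1, hx2, hx3⟩ := hx
          exact ⟨x, hx3, hx1, hx2, hdom⟩
      obtain ⟨x₁, hx₁u, hx₁v, -, hx₁⟩ := getx z₀ hz₀u hz₀v
      obtain ⟨x₂, hx₂u, hx₂v, hx₂x₁, hx₂⟩ := getx x₁ hx₁u hx₁v
      -- find a neighbour z ≠ v of u
      have hzex : ∃ z, G.Adj u z ∧ z ≠ v := by
        by_contra hno
        push_neg at hno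
        have hclosed : ∀ {a b : V}, G.Walk a b → (a = u ∨ a = v) → (b = u ∨ b = v) := by
          intro a b p
          induction p with
          | nil => exact id
          | cons h p ih =>
            intro ha
            apply ih
            rcases ha with rfl | rfl
            · exact Or.inr (hno _ h)
            · exact Or.inl (huniq _ h)
        obtain ⟨p⟩ := hG.preconnected u z₀
        rcases hclosed p (Or.inl rfl) with h | h
        · exact hz₀u h
        · exact hz₀v h
      obtain ⟨z, huz, hzv⟩ := hzex
      have hzu : z ≠ u := fun h => G.irrefl (h ▸ huz)
      set e : Sym2 V := s(u, z) with he_def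
      have he : e ∈ G.edgeSet := huz
      set G' := G.deleteEdges {e} with hG'_def
      -- adjacency facts in G'
      have hAdj' : ∀ a b, G.Adj a b → a ≠ u → b ≠ u → G'.Adj a b := by
        intro a b hab ha hb
        rw [hG'_def, SimpleGraph.deleteEdges_adj]
        refine ⟨hab, ?_⟩
        simp only [Set.mem_singleton_iff, he_def, Sym2.eq_iff]
        rintro (⟨rfl, rfl⟩ | ⟨rfl, rfl⟩)
        · exact ha rfl
        · exact hb rfl
      have hA_uv : G'.Adj u v := by
        rw [hG'_def, SimpleGraph.deleteEdges_adj]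
        refine ⟨hadj.symm, ?_⟩
        simp only [Set.mem_singleton_iff, he_def, Sym2.eq_iff]
        rintro (⟨-, h⟩ | ⟨-, h⟩)
        · exact hzv h.symm
        · exact hvu h
      -- pair domination in G'
      have pairdom : ∀ x, x ≠ u → x ≠ v → IsDomSet G (insert x (insert v ∅)) →
          (∀ D : Set V, u ∈ D → x ∈ D → IsDomSet G' D) ∧
          (∀ D : Set V, v ∈ D → x ∈ D → IsDomSet G' D) := by
        intro x hxu hxv hdom
        have hcov : ∀ w, w ≠ u → w ≠ v → w ≠ x → G'.Adj x w := by
          intro w hwu hwv hwx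
          rcases hdom w with h | ⟨a, ha, hadj'⟩
          · rcases (by simpa using h : w = x ∨ w = v) with h' | h'
            · exact absurd h' hwx
            · exact absurd h' hwv
          · rcases (by simpa using ha : a = x ∨ a = v) with rfl | rfl
            · exact hAdj' _ _ hadj' hxu hwu
            · exact absurd (huniq w hadj') hwu
        constructor
        · intro D hu' hx' w
          by_cases hwu : w = u
          · exact Or.inl (by rw [hwu]; exact hu')
          by_cases hwv : w = v
          · exact Or.inr ⟨u, hu', by rw [hwv]; exact hA_uv⟩
          by_cases hwx : w = x
          · exact Or.inl (by rw [hwx]; exact hx')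
          · exact Or.inr ⟨x, hx', hcov w hwu hwv hwx⟩
        · intro D hv' hx' w
          by_cases hwu : w = u
          · exact Or.inr ⟨v, hv', by rw [hwu]; exact hA_uv.symm⟩
          by_cases hwv : w = v
          · exact Or.inl (by rw [hwv]; exact hv')
          by_cases hwx : w = x
          · exact Or.inl (by rw [hwx]; exact hx')
          · exact Or.inr ⟨x, hx', hcov w hwu hwv hwx⟩
      obtain ⟨hux₁, hvx₁⟩ := pairdom x₁ hx₁u hx₁v hx₁
      obtain ⟨hux₂, hvx₂⟩ := pairdom x₂ hx₂u hx₂v hx₂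
      -- Dominator wins the S-game on G' in 2 moves
      have hwin' : DWinS G' 2 ∅ ∅ := by
        refine Or.inr ⟨⟨u, by simp⟩, fun s₁ _ => ?_⟩
        rw [dwin_two_iff]
        by_cases hs₁u : s₁ = u
        · rw [hs₁u]
          refine Or.inr ⟨v, by simp [hvu], Or.inr ⟨⟨x₁, by simp [hx₁v, hx₁u]⟩,
            fun s₂ hs₂ => ?_⟩⟩
          rw [dwin_one_iff]
          by_cases h12 : s₂ = x₁
          · refine Or.inr ⟨x₂, ?_, Or.inl (hvx₂ _ (by simp) (by simp))⟩
            simp only [Set.mem_union, Set.mem_insert_iff, Set.mem_empty_iff_false, or_false,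
              not_or]
            exact ⟨hx₂v, fun h => hx₂x₁ (h.trans h12), hx₂u⟩
          · refine Or.inr ⟨x₁, ?_, Or.inl (hvx₁ _ (by simp) (by simp))⟩
            simp only [Set.mem_union, Set.mem_insert_iff, Set.mem_empty_iff_false, or_false,
              not_or]
            exact ⟨hx₁v, fun h => h12 h.symm, hx₁u⟩
        by_cases hs₁v : s₁ = v
        · rw [hs₁v]
          refine Or.inr ⟨u, by simp [Ne.symm hvu], Or.inr ⟨⟨x₁, by simp [hx₁u, hx₁v]⟩,
            fun s₂ hs₂ => ?_⟩⟩
          rw [dwin_one_iff]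
          by_cases h12 : s₂ = x₁
          · refine Or.inr ⟨x₂, ?_, Or.inl (hux₂ _ (by simp) (by simp))⟩
            simp only [Set.mem_union, Set.mem_insert_iff, Set.mem_empty_iff_false, or_false,
              not_or]
            exact ⟨hx₂u, fun h => hx₂x₁ (h.trans h12), hx₂v⟩
          · refine Or.inr ⟨x₁, ?_, Or.inl (hux₁ _ (by simp) (by simp))⟩
            simp only [Set.mem_union, Set.mem_insert_iff, Set.mem_empty_iff_false, or_false,
              not_or]
            exact ⟨hx₁u, fun h => h12 h.symm, hx₁v⟩
        · -- s₁ ∉ {u, v} : Dominator first plays x₁ or x₂, then u or v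
          have main : ∀ x, x ≠ u → x ≠ v → x ≠ s₁ →
              (∀ D : Set V, u ∈ D → x ∈ D → IsDomSet G' D) →
              (∀ D : Set V, v ∈ D → x ∈ D → IsDomSet G' D) →
              (IsDomSet G' ∅ ∨
                ∃ d ∉ (∅ : Set V) ∪ insert s₁ ∅, (IsDomSet G' (insert d ∅) ∨
                  ((∃ w, w ∉ insert d (∅ : Set V) ∪ insert s₁ ∅) ∧
                    ∀ w ∉ insert d (∅ : Set V) ∪ insert s₁ ∅,
                      DWin G' 1 (insert d ∅) (insert w (insert s₁ ∅))))) := by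
            intro x hxu hxv hxs hud hvd
            refine Or.inr ⟨x, by simp [hxs], Or.inr ⟨⟨u, by
              simp only [Set.mem_union, Set.mem_insert_iff, Set.mem_empty_iff_false, or_false,
                not_or]
              exact ⟨Ne.symm hxu, fun h => hs₁u h.symm⟩⟩, fun s₂ hs₂ => ?_⟩⟩
            rw [dwin_one_iff]
            by_cases hs₂u : s₂ = u
            · refine Or.inr ⟨v, ?_, Or.inl (hvd _ (by simp) (by simp))⟩
              simp only [Set.mem_union, Set.mem_insert_iff, Set.mem_empty_iff_false, or_false,
                not_or]
              exact ⟨Ne.symm hxv, fun h => hvu (h.trans hs₂u), fun h => hs₁v h.symm⟩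
            · refine Or.inr ⟨u, ?_, Or.inl (hud _ (by simp) (by simp))⟩
              simp only [Set.mem_union, Set.mem_insert_iff, Set.mem_empty_iff_false, or_false,
                not_or]
              exact ⟨Ne.symm hxu, fun h => hs₂u h.symm, fun h => hs₁u h.symm⟩
          by_cases h11 : s₁ = x₁
          · exact main x₂ hx₂u hx₂v (fun h => hx₂x₁ (h.trans h11)) hux₂ hvx₂
          · exact main x₁ hx₁u hx₁v (fun h => h11 h.symm) hux₁ hvx₁
      have hle : gammaMB' G' ≤ 2 := by
        have hmem : (2 : ℕ∞) ∈ Nat.cast '' {k : ℕ | DWinS G' k ∅ ∅} :=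
          ⟨2, hwin', by simp⟩
        exact sInf_le hmem
      have := hcrit e he
      rw [h2] at this
      exact absurd (lt_of_lt_of_le this hle) (lt_irrefl _)
    · -- V = {u, v}
      push_neg at hex
      have hdom_u : IsDomSet G (insert u ∅) := by
        intro w
        by_cases hw : w = u
        · exact Or.inl (by simp [hw])
        · have : w = v := hex w hw
          subst this
          exact Or.inr ⟨u, by simp, hadj.symm⟩
      have hdom_v : IsDomSet G (insert v ∅) := by
        intro w
        by_cases hw : w = u
        · subst hw
          exact Or.inr ⟨v, by simp, hadj⟩
        · exact Or.inl (by simp [hex w hw])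
      have h1win : DWinS G 1 ∅ ∅ := by
        refine Or.inr ⟨⟨u, by simp⟩, fun s hs => ?_⟩
        rw [dwin_one_iff]
        by_cases hsu : s = u
        · subst hsu
          exact Or.inr ⟨v, by simp [hvu], Or.inl hdom_v⟩
        · have : s = v := hex s hsu
          subst this
          exact Or.inr ⟨u, by simp [Ne.symm hvu], Or.inl hdom_u⟩
      have hle : gammaMB' G ≤ 1 := by
        have hmem : (1 : ℕ∞) ∈ Nat.cast '' {k : ℕ | DWinS G k ∅ ∅} :=
          ⟨1, h1win, by simp⟩
        exact sInf_le hmem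
      rw [h2] at hle
      norm_num at hle
end

section
/- For every integer n ≥ 3, the complete bipartite graph K_{2,n} is connected and 2-γ'_MB-critical. -/
open MBD Sum

namespace MBDAux

variable {V : Type*}

lemma dwin_zero_iff {G : SimpleGraph V} {D S : Set V} :
    DWin G 0 D S ↔ IsDomSet G D := Iff.rfl

lemma dwin_succ_iff {G : SimpleGraph V} {k : ℕ} {D S : Set V} :
    DWin G (k+1) D S ↔ (IsDomSet G D ∨
      ∃ v ∉ D ∪ S,
        (IsDomSet G (insert v D) ∨
          ((∃ w, w ∉ insert v D ∪ S) ∧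
            ∀ w ∉ insert v D ∪ S, DWin G k (insert v D) (insert w S)))) := Iff.rfl

lemma dwin_one_iff {G : SimpleGraph V} {D S : Set V} :
    DWin G 1 D S ↔ DWin G (0+1) D S := Iff.rfl

lemma dwin_two_iff {G : SimpleGraph V} {D S : Set V} :
    DWin G 2 D S ↔ DWin G (1+1) D S := Iff.rfl

lemma dwin_mono {G : SimpleGraph V} :
    ∀ (k : ℕ) (D S : Set V), DWin G k D S → DWin G (k+1) D S := by
  intro k
  induction k with
  | zero => intro D S h; exact Or.inl h
  | succ k ih =>
    intro D S h
    rcases h with h | ⟨v, hv, h⟩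
    · exact Or.inl h
    · refine Or.inr ⟨v, hv, ?_⟩
      rcases h with h | ⟨hex, hall⟩
      · exact Or.inl h
      · exact Or.inr ⟨hex, fun w hw => ih _ _ (hall w hw)⟩

lemma dwins_mono {G : SimpleGraph V} {k : ℕ} {D S : Set V}
    (h : DWinS G k D S) : DWinS G (k+1) D S := by
  rcases h with h | ⟨hex, hall⟩
  · exact Or.inl h
  · exact Or.inr ⟨hex, fun w hw => dwin_mono _ _ _ (hall w hw)⟩

lemma not_isDomSet_of_blocked {G : SimpleGraph V} {u : V} {D : Set V}
    (hD : u ∉ D) (hDadj : ∀ d ∈ D, ¬ G.Adj d u) : ¬ IsDomSet G D := by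
  intro h
  rcases h u with h | ⟨d, hd, hadj⟩
  · exact hD h
  · exact hDadj d hd hadj

/-- If Staller occupies the whole closed neighbourhood of `u` and Dominator has nothing
in it, Dominator can never win. -/
lemma blocked {G : SimpleGraph V} (u : V) :
    ∀ (k : ℕ) (D S : Set V), u ∈ S → (∀ x, G.Adj x u → x ∈ S) →
      u ∉ D → (∀ d ∈ D, ¬ G.Adj d u) → ¬ DWin G k D S := by
  intro k
  induction k with
  | zero => intro D S _ _ hD hDadj h; exact not_isDomSet_of_blocked hD hDadj h
  | succ k ih =>
    intro D S hu hnb hD hDadj h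
    rcases h with h | ⟨v, hv, h⟩
    · exact not_isDomSet_of_blocked hD hDadj h
    · have hvS : v ∉ S := fun hvS => hv (Or.inr hvS)
      have hvu : v ≠ u := fun he => hvS (he ▸ hu)
      have hvadj : ¬ G.Adj v u := fun hadj => hvS (hnb v hadj)
      have hD' : u ∉ insert v D := by
        intro h'; rcases h' with h' | h'
        · exact hvu h'.symm
        · exact hD h'
      have hDadj' : ∀ d ∈ insert v D, ¬ G.Adj d u := by
        intro d hd; rcases hd with hd | hd
        · exact hd ▸ hvadj
        · exact hDadj d hd
      rcases h with h | ⟨⟨w, hw⟩, hall⟩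
      · exact not_isDomSet_of_blocked hD' hDadj' h
      · refine ih (insert v D) (insert w S) (Or.inr hu) ?_ hD' hDadj' (hall w hw)
        intro x hx; exact Or.inr (hnb x hx)

lemma isDomSet_mono {G G' : SimpleGraph V} (h : G ≤ G') {D : Set V}
    (hD : IsDomSet G D) : IsDomSet G' D := by
  intro v
  rcases hD v with hv | ⟨u, hu, hadj⟩
  · exact Or.inl hv
  · exact Or.inr ⟨u, hu, h hadj⟩

variable {n : ℕ}

/-- The two-element left-side of `K_{2,n}`. -/
lemma fin2_cases (c a : Fin 2) : c = a ∨ c = a + 1 := by revert c a; decide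

lemma fin2_succ_ne (a : Fin 2) : a + 1 ≠ a := by revert a; decide

lemma fin2_eq_of_ne (c c' a : Fin 2) (h1 : c ≠ a) (h2 : c' ≠ a) : c = c' := by
  revert c c' a; decide

lemma exists_avoid3 (hn : 3 ≤ n) (x y z : Fin 2 ⊕ Fin n) :
    ∃ v : Fin 2 ⊕ Fin n, v ≠ x ∧ v ≠ y ∧ v ≠ z := by
  by_contra h
  push_neg at h
  have hsub : (Finset.univ : Finset (Fin 2 ⊕ Fin n)) ⊆ {x, y, z} := by
    intro v _
    have := h v
    simp only [Finset.mem_insert, Finset.mem_singleton]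
    tauto
  have h1 := Finset.card_le_card hsub
  have h2 : ({x, y, z} : Finset (Fin 2 ⊕ Fin n)).card ≤ 3 := by
    apply le_trans (Finset.card_insert_le _ _)
    have := Finset.card_insert_le y ({z} : Finset (Fin 2 ⊕ Fin n))
    simp at this ⊢
    omega
  rw [Finset.card_univ] at h1
  simp [Fintype.card_sum] at h1
  omega

lemma exists_avoid2_fin (hn : 3 ≤ n) (b j : Fin n) :
    ∃ i : Fin n, i ≠ b ∧ i ≠ j := by
  by_contra h
  push_neg at h
  have hsub : (Finset.univ : Finset (Fin n)) ⊆ {b, j} := by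
    intro v _
    have := h v
    simp only [Finset.mem_insert, Finset.mem_singleton]
    tauto
  have h1 := Finset.card_le_card hsub
  have h2 : ({b, j} : Finset (Fin n)).card ≤ 2 := by
    apply le_trans (Finset.card_insert_le _ _); simp
  rw [Finset.card_univ] at h1
  simp at h1
  omega

lemma exists_fin_ne (hn : 3 ≤ n) (j : Fin n) : ∃ i : Fin n, i ≠ j := by
  obtain ⟨i, h1, _⟩ := exists_avoid2_fin hn j j
  exact ⟨i, h1⟩

local notation "K2n" => completeBipartiteGraph (Fin 2) (Fin n)

lemma not_isDomSet_empty {G : SimpleGraph (Fin 2 ⊕ Fin n)} :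
    ¬ IsDomSet G (∅ : Set (Fin 2 ⊕ Fin n)) := by
  intro h
  rcases h (inl 0) with h | ⟨u, hu, _⟩ <;> simp at *

lemma not_isDomSet_single (hn : 3 ≤ n) (v : Fin 2 ⊕ Fin n) :
    ¬ IsDomSet K2n (insert v (∅ : Set (Fin 2 ⊕ Fin n))) := by
  intro h
  rcases v with c | j
  · rcases h (inl (c + 1)) with h' | ⟨u, hu, hadj⟩
    · simp only [Set.mem_insert_iff, Set.mem_empty_iff_false, or_false, Sum.inl.injEq] at h'
      exact fin2_succ_ne c h'
    · simp at hu
      subst hu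
      simp at hadj
  · obtain ⟨i, hi⟩ := exists_fin_ne hn j
    rcases h (inr i) with h' | ⟨u, hu, hadj⟩
    · simp only [Set.mem_insert_iff, Set.mem_empty_iff_false, or_false, Sum.inr.injEq] at h'
      exact hi h'
    · simp at hu
      subst hu
      simp at hadj

lemma not_isDomSet_two_right (hn : 3 ≤ n) (b j : Fin n) :
    ¬ IsDomSet K2n (insert (inr j) (insert (inr b) (∅ : Set (Fin 2 ⊕ Fin n)))) := by
  intro h
  obtain ⟨i, hib, hij⟩ := exists_avoid2_fin hn b j
  rcases h (inr i) with h' | ⟨u, hu, hadj⟩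
  · simp only [Set.mem_insert_iff, Set.mem_empty_iff_false, or_false, Sum.inr.injEq] at h'
    rcases h' with h' | h' <;> [exact hij h'; exact hib h']
  · simp at hu
    rcases hu with hu | hu <;> subst hu <;> simp at hadj

lemma isDomSet_pair (a : Fin 2) (v : Fin 2 ⊕ Fin n) (hv : v ≠ inl a) :
    IsDomSet K2n (insert v (insert (inl a) (∅ : Set (Fin 2 ⊕ Fin n)))) := by
  intro u
  rcases u with c | j
  · rcases fin2_cases c a with hc | hc
    · subst hc; exact Or.inl (by simp)
    · rcases v with c' | j'
      · have hc' : c' ≠ a := fun he => hv (by rw [he])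
        have : c' = c := fin2_eq_of_ne c' c a hc' (hc ▸ fin2_succ_ne a)
        subst this
        exact Or.inl (by simp)
      · exact Or.inr ⟨inr j', by simp, by simp⟩
  · exact Or.inr ⟨inl a, by simp, by simp⟩

lemma dwin2_pos (hn : 3 ≤ n) (a : Fin 2) (w : Fin 2 ⊕ Fin n) (hw : w ≠ inl a) :
    DWin K2n 2 (∅ : Set (Fin 2 ⊕ Fin n)) {w} := by
  rw [dwin_two_iff, dwin_succ_iff]
  refine Or.inr ⟨inl a, by simp [Ne.symm hw], Or.inr ⟨?_, ?_⟩⟩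
  · obtain ⟨v, h1, h2, _⟩ := exists_avoid3 hn (inl a) w w
    exact ⟨v, by simp [h1, h2]⟩
  · intro w2 hw2
    rw [dwin_one_iff, dwin_succ_iff]
    obtain ⟨v, h1, h2, h3⟩ := exists_avoid3 hn (inl a) w w2
    refine Or.inr ⟨v, by simp [h1, h2, h3], Or.inl ?_⟩
    have := isDomSet_pair a v h1
    simpa using this

lemma dwins2_pos (hn : 3 ≤ n) : DWinS K2n 2 (∅ : Set (Fin 2 ⊕ Fin n)) ∅ := by
  refine Or.inr ⟨⟨inl 0, by simp⟩, fun w hw => ?_⟩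
  have : ∃ a : Fin 2, w ≠ inl a := by
    rcases w with c | j
    · exact ⟨c + 1, by simp [Ne.symm (fin2_succ_ne c)]⟩
    · exact ⟨0, by simp⟩
  obtain ⟨a, ha⟩ := this
  have := dwin2_pos hn a w ha
  simpa using this

lemma not_dwins0 (hn : 3 ≤ n) : ¬ DWinS K2n 0 (∅ : Set (Fin 2 ⊕ Fin n)) ∅ := by
  rintro (h | ⟨-, hall⟩)
  · exact not_isDomSet_empty h
  · have := hall (inl 0) (by simp)
    rw [dwin_zero_iff] at this
    exact not_isDomSet_empty this

lemma not_dwins1 (hn : 3 ≤ n) : ¬ DWinS K2n 1 (∅ : Set (Fin 2 ⊕ Fin n)) ∅ := by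
  rintro (h | ⟨-, hall⟩)
  · exact not_isDomSet_empty h
  · have h1 := hall (inl 0) (by simp)
    rw [dwin_one_iff, dwin_succ_iff] at h1
    rcases h1 with h1 | ⟨v, hv, h1⟩
    · exact not_isDomSet_empty h1
    · rcases h1 with h1 | ⟨⟨w', hw'⟩, hall'⟩
      · exact not_isDomSet_single hn v h1
      · have := hall' w' hw'
        rw [dwin_zero_iff] at this
        exact not_isDomSet_single hn v this

lemma not_dwins2_deleted (hn : 3 ≤ n) (a : Fin 2) (b : Fin n) :
    ¬ DWinS (SimpleGraph.deleteEdges K2n {s(inl a, inr b)}) 2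
      (∅ : Set (Fin 2 ⊕ Fin n)) ∅ := by
  set G' := SimpleGraph.deleteEdges K2n {s(inl a, inr b)} with hG'
  have hle : G' ≤ K2n := SimpleGraph.deleteEdges_le _
  rintro (h | ⟨-, hall⟩)
  · exact not_isDomSet_empty h
  · set a' := a + 1 with ha'def
    have ha' : a' ≠ a := fin2_succ_ne a
    have h2 := hall (inl a') (by simp)
    rw [dwin_two_iff, dwin_succ_iff] at h2
    rcases h2 with h2 | ⟨v, hv, h2⟩
    · exact not_isDomSet_empty h2
    · have hva' : v ≠ inl a' := by
        intro he; apply hv; simp [he]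
      rcases h2 with h2 | ⟨-, hall2⟩
      · exact not_isDomSet_single hn v (isDomSet_mono hle h2)
      · by_cases hvb : v = inr b
        · subst hvb
          have h4 := hall2 (inl a) (by simp [Ne.symm ha'])
          rw [dwin_one_iff, dwin_succ_iff] at h4
          rcases h4 with h4 | ⟨v', hv', h4⟩
          · exact not_isDomSet_single hn (inr b) (isDomSet_mono hle h4)
          · simp only [Set.mem_union, Set.mem_insert_iff, Set.mem_singleton_iff,
              Set.mem_empty_iff_false, or_false, not_or] at hv'
            obtain ⟨hv'b, hv'a, hv'a'⟩ := hv'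
            have hdom : IsDomSet G' (insert v' (insert (inr b) ∅)) := by
              rcases h4 with h4 | ⟨⟨w', hw'⟩, hall3⟩
              · exact h4
              · have := hall3 w' hw'
                rw [dwin_zero_iff] at this
                exact this
            have hdom' := isDomSet_mono hle hdom
            rcases v' with c | j
            · rcases fin2_cases c a with hc | hc
              · exact hv'a (by rw [hc])
              · exact hv'a' (by rw [hc])
            · exact not_isDomSet_two_right hn b j hdom'
        · have h4 := hall2 (inr b) (by simp [Ne.symm hvb])
          refine blocked (inr b) 1 _ _ ?_ ?_ ?_ ?_ h4
          · simp
          · intro x hx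
            rw [hG', SimpleGraph.deleteEdges_adj] at hx
            obtain ⟨hadj, hne⟩ := hx
            rcases x with c | j
            · rcases fin2_cases c a with hc | hc
              · exfalso; apply hne; subst hc; simp
              · subst hc; simp [ha'def]
            · simp at hadj
          · intro hmem
            simp at hmem
            exact hvb hmem.symm
          · intro d hd hadj
            simp only [Set.mem_insert_iff, Set.mem_empty_iff_false, or_false] at hd
            rw [hd] at hadj
            rw [hG', SimpleGraph.deleteEdges_adj] at hadj
            obtain ⟨hadj, hne⟩ := hadj
            rcases v with c | j
            · rcases fin2_cases c a with hc | hc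
              · exact hne (by subst hc; simp)
              · exact hva' (by rw [hc])
            · simp at hadj

lemma connected_K2n (hn : 3 ≤ n) : (completeBipartiteGraph (Fin 2) (Fin n)).Connected := by
  have h0 : (0 : ℕ) < n := by omega
  constructor
  · intro u v
    have key : ∀ (c : Fin 2) (j : Fin n), (K2n).Adj (inl c) (inr j) := by
      intro c j; simp
    rcases u with c | j <;> rcases v with c' | j'
    · exact ((key c ⟨0, h0⟩).reachable).trans ((key c' ⟨0, h0⟩).symm.reachable)
    · exact (key c j').reachable
    · exact ((key c' j).symm).reachable
    · exact ((key 0 j).symm.reachable).trans ((key 0 j').reachable)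

end MBDAux
open MBD

/-- For every `n ≥ 3`, the complete bipartite graph `K_{2,n}` is connected and
`2`-`γ'_MB`-critical. -/
theorem completeBipartite_two_gammaMB'_critical (n : ℕ) (hn : 3 ≤ n) :
    (completeBipartiteGraph (Fin 2) (Fin n)).Connected ∧
      gammaMB' (completeBipartiteGraph (Fin 2) (Fin n)) = 2 ∧
      ∀ e ∈ (completeBipartiteGraph (Fin 2) (Fin n)).edgeSet,
        (2 : ℕ∞) < gammaMB' ((completeBipartiteGraph (Fin 2) (Fin n)).deleteEdges {e}) := by
  refine ⟨MBDAux.connected_K2n hn, ?_, ?_⟩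
  · apply le_antisymm
    · exact sInf_le ⟨2, MBDAux.dwins2_pos hn, rfl⟩
    · apply le_sInf
      rintro x ⟨k, hk, rfl⟩
      have h2 : 2 ≤ k := by
        by_contra h
        interval_cases k
        · exact MBDAux.not_dwins0 hn hk
        · exact MBDAux.not_dwins1 hn hk
      exact_mod_cast h2
  · intro e he
    induction e using Sym2.ind with
    | _ u v =>
      rw [SimpleGraph.mem_edgeSet] at he
      have key : ∀ (a : Fin 2) (b : Fin n),
          (2 : ℕ∞) < gammaMB'
            ((completeBipartiteGraph (Fin 2) (Fin n)).deleteEdges {s(inl a, inr b)}) := by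
        intro a b
        have hnot : ∀ k ≤ 2,
            ¬ DWinS ((completeBipartiteGraph (Fin 2) (Fin n)).deleteEdges {s(inl a, inr b)})
              k ∅ ∅ := by
          intro k hk hw
          apply MBDAux.not_dwins2_deleted hn a b
          interval_cases k
          · exact MBDAux.dwins_mono (MBDAux.dwins_mono hw)
          · exact MBDAux.dwins_mono hw
          · exact hw
        have h3 : (3 : ℕ∞) ≤ gammaMB'
            ((completeBipartiteGraph (Fin 2) (Fin n)).deleteEdges {s(inl a, inr b)}) := by
          apply le_sInf
          rintro x ⟨k, hk, rfl⟩
          have h4 : 3 ≤ k := by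
            by_contra h
            exact hnot k (by omega) hk
          exact_mod_cast h4
        exact lt_of_lt_of_le (by norm_num) h3
      rcases u with c | j <;> rcases v with c' | j'
      · simp at he
      · exact key c j'
      · rw [Sym2.eq_swap]
        exact key c' j
      · simp at he
end

section
/- Let G be a bipartite graph with bipartition V_1, V_2 where |V_1| ≥ 3 and |V_2| ≥ 3. If each V_i (i ∈ {1,2}) contains exactly two bipartite dominating vertices and every vertex of G other than these four bipartite dominating vertices has degree exactly 2, then G is 2-γ'_MB-critical. -/
namespace MBD
variable {V : Type*}

lemma dwin_succ (G : SimpleGraph V) (k : ℕ) (D S : Set V) :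
    DWin G (k+1) D S ↔ (IsDomSet G D ∨
      ∃ v ∉ D ∪ S,
        (IsDomSet G (insert v D) ∨
          ((∃ w, w ∉ insert v D ∪ S) ∧
            ∀ w ∉ insert v D ∪ S, DWin G k (insert v D) (insert w S)))) := Iff.rfl

lemma dwin_zero (G : SimpleGraph V) (D S : Set V) : DWin G 0 D S ↔ IsDomSet G D := Iff.rfl

lemma aux0 {H : SimpleGraph V} (h : ¬ IsDomSet H ∅) : ¬ DWinS H 0 ∅ ∅ := by
  rintro (h'|⟨⟨w,hw⟩,hall⟩)
  · exact h h'
  · exact h ((dwin_zero H ∅ _).1 (hall w hw))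

lemma aux1 {H : SimpleGraph V} (h : ¬ IsDomSet H ∅)
    (h1 : ∀ v : V, ¬ IsDomSet H (insert v ∅)) : ¬ DWinS H 1 ∅ ∅ := by
  rintro (h'|⟨⟨w,hw⟩,hall⟩)
  · exact h h'
  · rcases (dwin_succ H 0 ∅ _).1 (hall w hw) with h'|⟨v,hv,(hd|⟨⟨w',hw'⟩,hall2⟩)⟩
    · exact h h'
    · exact h1 v hd
    · exact h1 v ((dwin_zero H _ _).1 (hall2 w' hw'))

lemma aux2 {H : SimpleGraph V} (w0 : V) (h : ¬ IsDomSet H ∅)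
    (h1 : ∀ v : V, ¬ IsDomSet H (insert v ∅))
    (h2 : ∀ v, v ≠ w0 → ∃ w1, w1 ≠ w0 ∧ w1 ≠ v ∧ ∀ u, u ≠ v → u ≠ w0 → u ≠ w1 →
      ¬ IsDomSet H (insert u (insert v ∅))) : ¬ DWinS H 2 ∅ ∅ := by
  rintro (h'|⟨-,hall⟩)
  · exact h h'
  · have h20 := hall w0 (by simp)
    rcases (dwin_succ H 1 ∅ _).1 h20 with h'|⟨v,hv,h'⟩
    · exact h h'
    have hvw0 : v ≠ w0 := by simpa using hv
    obtain ⟨w1, hw10, hw1v, hkill⟩ := h2 v hvw0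
    rcases h' with hd | ⟨-, hall2⟩
    · exact h1 v hd
    · have h3 := hall2 w1 (by simp [hw1v, hw10])
      rcases (dwin_succ H 0 _ _).1 h3 with h'|⟨u,hu,h''⟩
      · exact h1 v h'
      have hu' : ¬u = w1 ∧ ¬u = w0 ∧ ¬u = v := by simpa using hu
      rcases h'' with hd|⟨⟨w2,hw2⟩, hall3⟩
      · exact hkill u hu'.2.2 hu'.2.1 hu'.1 hd
      · exact hkill u hu'.2.2 hu'.2.1 hu'.1 ((dwin_zero H _ _).1 (hall3 w2 hw2))

end MBD

open MBD

/-- Let `G` be a bipartite graph with bipartition `V₁, V₂` where `|V₁| ≥ 3` and `|V₂| ≥ 3`.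
If each `Vᵢ` contains exactly two bipartite dominating vertices (vertices adjacent to every
vertex of the opposite side) and every vertex of `G` other than these four has degree exactly
`2`, then `G` is `2`-`γ'_MB`-critical. -/
theorem bipartite_two_gammaMB'_critical_of {V : Type*} [Fintype V]
    (G : SimpleGraph V) [DecidableRel G.Adj] (V1 V2 : Set V)
    (hpart : V1 ∪ V2 = Set.univ) (hdisj : Disjoint V1 V2)
    (hbip : ∀ u v, G.Adj u v → (u ∈ V1 ∧ v ∈ V2) ∨ (u ∈ V2 ∧ v ∈ V1))
    (hV1 : 3 ≤ V1.ncard) (hV2 : 3 ≤ V2.ncard)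
    (hbd1 : {x | x ∈ V1 ∧ ∀ y ∈ V2, G.Adj x y}.ncard = 2)
    (hbd2 : {x | x ∈ V2 ∧ ∀ y ∈ V1, G.Adj x y}.ncard = 2)
    (hdeg : ∀ v, v ∉ {x | x ∈ V1 ∧ ∀ y ∈ V2, G.Adj x y} ∪ {x | x ∈ V2 ∧ ∀ y ∈ V1, G.Adj x y} →
      G.degree v = 2) :
    gammaMB' G = 2 ∧ ∀ e ∈ G.edgeSet, gammaMB' G < gammaMB' (G.deleteEdges {e}) := by
  classical
  set A : Set V := {x | x ∈ V1 ∧ ∀ y ∈ V2, G.Adj x y} with hAdef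
  set B : Set V := {x | x ∈ V2 ∧ ∀ y ∈ V1, G.Adj x y} with hBdef
  obtain ⟨a1, a2, hane, hAeq⟩ := Set.ncard_eq_two.mp hbd1
  obtain ⟨b1, b2, hbne, hBeq⟩ := Set.ncard_eq_two.mp hbd2
  have hAV1 : A ⊆ V1 := fun x hx => hx.1
  have hBV2 : B ⊆ V2 := fun x hx => hx.1
  have hdj : ∀ x, x ∈ V1 → x ∈ V2 → False := fun x h1 h2 => Set.disjoint_left.mp hdisj h1 h2
  have hcov : ∀ x : V, x ∈ V1 ∨ x ∈ V2 := by
    intro x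
    have hx : x ∈ V1 ∪ V2 := by rw [hpart]; trivial
    exact hx
  have hnadj1 : ∀ x ∈ V1, ∀ y ∈ V1, ¬ G.Adj x y := by
    intro x hx y hy h
    rcases hbip x y h with ⟨h1, h2⟩ | ⟨h1, h2⟩
    · exact hdj y hy h2
    · exact hdj x hx h1
  have hnadj2 : ∀ x ∈ V2, ∀ y ∈ V2, ¬ G.Adj x y := by
    intro x hx y hy h
    rcases hbip x y h with ⟨h1, h2⟩ | ⟨h1, h2⟩
    · exact hdj x h1 hx
    · exact hdj y h2 hy
  have ha1A : a1 ∈ A := by rw [hAeq]; simp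
  have ha2A : a2 ∈ A := by rw [hAeq]; simp
  have hb1B : b1 ∈ B := by rw [hBeq]; simp
  have hb2B : b2 ∈ B := by rw [hBeq]; simp
  have hAadj : ∀ a ∈ A, ∀ y ∈ V2, G.Adj a y := fun a ha y hy => ha.2 y hy
  have hBadj : ∀ b ∈ B, ∀ x ∈ V1, G.Adj b x := fun b hb x hx => hb.2 x hx
  have hndV : ∀ x ∈ V1, ∀ y ∈ V2, x ≠ y := fun x hx y hy h => hdj x hx (h ▸ hy)
  have hab : ∀ x ∈ A, ∀ y ∈ B, x ≠ y := fun x hx y hy => hndV x (hAV1 hx) y (hBV2 hy)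
  have hnb1 : ∀ x, x ∈ V1 → x ∉ A → ∀ y, G.Adj x y ↔ y ∈ B := by
    intro x hx1 hxA y
    have hxB : x ∉ B := fun h => hdj x hx1 (hBV2 h)
    have hdx : G.degree x = 2 := hdeg x (by simp only [Set.mem_union]; tauto)
    have hsub : ({b1, b2} : Finset V) ⊆ G.neighborFinset x := by
      intro z hz
      rw [SimpleGraph.mem_neighborFinset]
      rcases Finset.mem_insert.mp hz with rfl | hz
      · exact (hBadj _ hb1B x hx1).symm
      · rw [Finset.mem_singleton] at hz
        subst hz
        exact (hBadj _ hb2B x hx1).symm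
    have hcard : ({b1, b2} : Finset V).card = 2 := by
      rw [Finset.card_insert_of_notMem (by simp [hbne]), Finset.card_singleton]
    have heq : ({b1, b2} : Finset V) = G.neighborFinset x := by
      apply Finset.eq_of_subset_of_card_le hsub
      rw [hcard, SimpleGraph.card_neighborFinset_eq_degree, hdx]
    constructor
    · intro h
      have hy : y ∈ G.neighborFinset x := by rwa [SimpleGraph.mem_neighborFinset]
      rw [← heq] at hy
      rcases Finset.mem_insert.mp hy with rfl | hy
      · exact hb1B
      · rw [Finset.mem_singleton] at hy; subst hy; exact hb2B
    · intro h
      exact (hBadj y h x hx1).symm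
  have hnb2 : ∀ x, x ∈ V2 → x ∉ B → ∀ y, G.Adj x y ↔ y ∈ A := by
    intro x hx2 hxB y
    have hxA : x ∉ A := fun h => hdj x (hAV1 h) hx2
    have hdx : G.degree x = 2 := hdeg x (by simp only [Set.mem_union]; tauto)
    have hsub : ({a1, a2} : Finset V) ⊆ G.neighborFinset x := by
      intro z hz
      rw [SimpleGraph.mem_neighborFinset]
      rcases Finset.mem_insert.mp hz with rfl | hz
      · exact (hAadj _ ha1A x hx2).symm
      · rw [Finset.mem_singleton] at hz
        subst hz
        exact (hAadj _ ha2A x hx2).symm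
    have hcard : ({a1, a2} : Finset V).card = 2 := by
      rw [Finset.card_insert_of_notMem (by simp [hane]), Finset.card_singleton]
    have heq : ({a1, a2} : Finset V) = G.neighborFinset x := by
      apply Finset.eq_of_subset_of_card_le hsub
      rw [hcard, SimpleGraph.card_neighborFinset_eq_degree, hdx]
    constructor
    · intro h
      have hy : y ∈ G.neighborFinset x := by rwa [SimpleGraph.mem_neighborFinset]
      rw [← heq] at hy
      rcases Finset.mem_insert.mp hy with rfl | hy
      · exact ha1A
      · rw [Finset.mem_singleton] at hy; subst hy; exact ha2A
    · intro h
      exact (hAadj y h x hx2).symm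
  obtain ⟨c0, hc0V, hc0A⟩ : ∃ c, c ∈ V1 ∧ c ∉ A := by
    by_contra h
    push_neg at h
    have hsub : V1 ⊆ A := fun x hx => h x hx
    have := Set.ncard_le_ncard hsub (Set.toFinite A)
    rw [hbd1] at this
    omega
  obtain ⟨d0, hd0V, hd0B⟩ : ∃ d, d ∈ V2 ∧ d ∉ B := by
    by_contra h
    push_neg at h
    have hsub : V2 ⊆ B := fun x hx => h x hx
    have := Set.ncard_le_ncard hsub (Set.toFinite B)
    rw [hbd2] at this
    omega
  have h3 : ∀ p q : V, ∃ z : V, z ≠ p ∧ z ≠ q := by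
    intro p q
    have d13 : a1 ≠ b1 := hab a1 ha1A b1 hb1B
    have d23 : a2 ≠ b1 := hab a2 ha2A b1 hb1B
    by_cases h1 : a1 = p ∨ a1 = q
    · by_cases h2 : a2 = p ∨ a2 = q
      · have hpq : (p = a1 ∧ q = a2) ∨ (p = a2 ∧ q = a1) := by
          rcases h1 with h1 | h1 <;> rcases h2 with h2 | h2
          · exact absurd (h1.trans h2.symm) hane
          · exact Or.inl ⟨h1.symm, h2.symm⟩
          · exact Or.inr ⟨h2.symm, h1.symm⟩
          · exact absurd (h1.trans h2.symm) hane
        rcases hpq with ⟨rfl, rfl⟩ | ⟨rfl, rfl⟩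
        · exact ⟨b1, d13.symm, d23.symm⟩
        · exact ⟨b1, d23.symm, d13.symm⟩
      · push_neg at h2; exact ⟨a2, h2⟩
    · push_neg at h1; exact ⟨a1, h1⟩
  have hdomAB : ∀ p q : V, p ∈ A → q ∈ B → ∀ D : Set V, p ∈ D → q ∈ D → IsDomSet G D := by
    intro p q hp hq D hpD hqD x
    rcases hcov x with hx | hx
    · exact Or.inr ⟨q, hqD, hBadj q hq x hx⟩
    · exact Or.inr ⟨p, hpD, hAadj p hp x hx⟩
  have hotherA : ∀ p, p ∈ A → ∃ q, q ∈ A ∧ q ≠ p ∧ ∀ z ∈ A, z = p ∨ z = q := by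
    intro p hp
    have hp' : p = a1 ∨ p = a2 := by rw [hAeq] at hp; simpa using hp
    have hall : ∀ z ∈ A, z = a1 ∨ z = a2 := by
      intro z hz; rw [hAeq] at hz; simpa using hz
    rcases hp' with h | h
    · refine ⟨a2, ha2A, fun hq => hane (hq.trans h).symm, fun z hz => ?_⟩
      rcases hall z hz with h' | h'
      · exact Or.inl (h'.trans h.symm)
      · exact Or.inr h'
    · refine ⟨a1, ha1A, fun hq => hane (hq.trans h), fun z hz => ?_⟩
      rcases hall z hz with h' | h'
      · exact Or.inr h'
      · exact Or.inl (h'.trans h.symm)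
  have hotherB : ∀ p, p ∈ B → ∃ q, q ∈ B ∧ q ≠ p ∧ ∀ z ∈ B, z = p ∨ z = q := by
    intro p hp
    have hp' : p = b1 ∨ p = b2 := by rw [hBeq] at hp; simpa using hp
    have hall : ∀ z ∈ B, z = b1 ∨ z = b2 := by
      intro z hz; rw [hBeq] at hz; simpa using hz
    rcases hp' with h | h
    · refine ⟨b2, hb2B, fun hq => hbne (hq.trans h).symm, fun z hz => ?_⟩
      rcases hall z hz with h' | h'
      · exact Or.inl (h'.trans h.symm)
      · exact Or.inr h'
    · refine ⟨b1, hb1B, fun hq => hbne (hq.trans h), fun z hz => ?_⟩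
      rcases hall z hz with h' | h'
      · exact Or.inr h'
      · exact Or.inl (h'.trans h.symm)
  -- master classification of dominating pairs
  have master : ∀ (H : SimpleGraph V), (∀ a b, H.Adj a b → G.Adj a b) →
      ∀ v u : V, v ≠ u → IsDomSet H (insert u (insert v ∅)) →
      ((v ∈ A ∧ u ∈ B) ∨ (u ∈ A ∧ v ∈ B)) ∨
        (V1 \ A ⊆ insert u (insert v ∅) ∧ V2 \ B ⊆ insert u (insert v ∅)) := by
    intro H hle v u hvu hdom
    have hmem : ∀ x, x ∈ (insert u (insert v ∅) : Set V) ↔ x = u ∨ x = v := by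
      intro x; simp
    have M1 : ∀ x, x ∈ V1 → x ∉ A → x ∉ (insert u (insert v ∅) : Set V) →
        ∃ b ∈ B, b ∈ (insert u (insert v ∅) : Set V) := by
      intro x hx1 hxA hxD
      rcases hdom x with h | ⟨z, hzD, hadj⟩
      · exact absurd h hxD
      · exact ⟨z, (hnb1 x hx1 hxA z).mp ((hle _ _ hadj).symm), hzD⟩
    have M2 : ∀ x, x ∈ V2 → x ∉ B → x ∉ (insert u (insert v ∅) : Set V) →
        ∃ a ∈ A, a ∈ (insert u (insert v ∅) : Set V) := by
      intro x hx2 hxB hxD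
      rcases hdom x with h | ⟨z, hzD, hadj⟩
      · exact absurd h hxD
      · exact ⟨z, (hnb2 x hx2 hxB z).mp ((hle _ _ hadj).symm), hzD⟩
    by_cases hA : v ∈ A ∨ u ∈ A
    · by_cases hB : v ∈ B ∨ u ∈ B
      · left
        rcases hA with h | h <;> rcases hB with h' | h'
        · exact (hdj v (hAV1 h) (hBV2 h')).elim
        · exact Or.inl ⟨h, h'⟩
        · exact Or.inr ⟨h, h'⟩
        · exact (hdj u (hAV1 h) (hBV2 h')).elim
      · exfalso
        push_neg at hB
        have hc0D : c0 ∈ (insert u (insert v ∅) : Set V) := by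
          by_contra hxD
          obtain ⟨b, hbB, hbD⟩ := M1 c0 hc0V hc0A hxD
          rcases (hmem b).1 hbD with rfl | rfl
          · exact hB.2 hbB
          · exact hB.1 hbB
        obtain ⟨p, hpA, hpD⟩ : ∃ p, p ∈ A ∧ p ∈ (insert u (insert v ∅) : Set V) := by
          rcases hA with h | h
          · exact ⟨v, h, by simp⟩
          · exact ⟨u, h, by simp⟩
        have hpc0 : p ≠ c0 := fun h => hc0A (h ▸ hpA)
        have hDeq : ∀ z, z ∈ (insert u (insert v ∅) : Set V) → z = p ∨ z = c0 := by
          intro z hz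
          have hp' := (hmem p).1 hpD
          have hc' := (hmem c0).1 hc0D
          rcases (hmem z).1 hz with rfl | rfl
          · rcases hp' with hp' | hp'
            · exact Or.inl hp'.symm
            · rcases hc' with hc' | hc'
              · exact Or.inr hc'.symm
              · exact absurd (hp'.trans hc'.symm) hpc0
          · rcases hp' with hp' | hp'
            · rcases hc' with hc' | hc'
              · exact absurd (hp'.trans hc'.symm) hpc0
              · exact Or.inr hc'.symm
            · exact Or.inl hp'.symm
        obtain ⟨q, hqA, hqp, -⟩ := hotherA p hpA
        have hqD : q ∉ (insert u (insert v ∅) : Set V) := by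
          intro hq
          rcases hDeq q hq with h | h
          · exact hqp h
          · exact hc0A (h ▸ hqA)
        rcases hdom q with h | ⟨z, hzD, hadj⟩
        · exact hqD h
        · have hzG := hle _ _ hadj
          rcases hDeq z hzD with h' | h'
          · have hpq : G.Adj p q := by rw [← h']; exact hzG
            exact hnadj1 p (hAV1 hpA) q (hAV1 hqA) hpq
          · have hcq : G.Adj c0 q := by rw [← h']; exact hzG
            have hqB : q ∈ B := (hnb1 c0 hc0V hc0A q).mp hcq
            exact hdj q (hAV1 hqA) (hBV2 hqB)
    · by_cases hB : v ∈ B ∨ u ∈ B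
      · exfalso
        push_neg at hA
        have hd0D : d0 ∈ (insert u (insert v ∅) : Set V) := by
          by_contra hxD
          obtain ⟨a, haA, haD⟩ := M2 d0 hd0V hd0B hxD
          rcases (hmem a).1 haD with rfl | rfl
          · exact hA.2 haA
          · exact hA.1 haA
        obtain ⟨p, hpB, hpD⟩ : ∃ p, p ∈ B ∧ p ∈ (insert u (insert v ∅) : Set V) := by
          rcases hB with h | h
          · exact ⟨v, h, by simp⟩
          · exact ⟨u, h, by simp⟩
        have hpd0 : p ≠ d0 := fun h => hd0B (h ▸ hpB)
        have hDeq : ∀ z, z ∈ (insert u (insert v ∅) : Set V) → z = p ∨ z = d0 := by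
          intro z hz
          have hp' := (hmem p).1 hpD
          have hc' := (hmem d0).1 hd0D
          rcases (hmem z).1 hz with rfl | rfl
          · rcases hp' with hp' | hp'
            · exact Or.inl hp'.symm
            · rcases hc' with hc' | hc'
              · exact Or.inr hc'.symm
              · exact absurd (hp'.trans hc'.symm) hpd0
          · rcases hp' with hp' | hp'
            · rcases hc' with hc' | hc'
              · exact absurd (hp'.trans hc'.symm) hpd0
              · exact Or.inr hc'.symm
            · exact Or.inl hp'.symm
        obtain ⟨q, hqB, hqp, -⟩ := hotherB p hpB
        have hqD : q ∉ (insert u (insert v ∅) : Set V) := by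
          intro hq
          rcases hDeq q hq with h | h
          · exact hqp h
          · exact hd0B (h ▸ hqB)
        rcases hdom q with h | ⟨z, hzD, hadj⟩
        · exact hqD h
        · have hzG := hle _ _ hadj
          rcases hDeq z hzD with h' | h'
          · have hpq : G.Adj p q := by rw [← h']; exact hzG
            exact hnadj2 p (hBV2 hpB) q (hBV2 hqB) hpq
          · have hdq : G.Adj d0 q := by rw [← h']; exact hzG
            have hqA : q ∈ A := (hnb2 d0 hd0V hd0B q).mp hdq
            exact hdj q (hAV1 hqA) (hBV2 hqB)
      · right
        push_neg at hA
        push_neg at hB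
        constructor
        · rintro x ⟨hx1, hxA⟩
          by_contra hxD
          obtain ⟨b, hbB, hbD⟩ := M1 x hx1 hxA hxD
          rcases (hmem b).1 hbD with rfl | rfl
          · exact hB.2 hbB
          · exact hB.1 hbB
        · rintro x ⟨hx2, hxB⟩
          by_contra hxD
          obtain ⟨a, haA, haD⟩ := M2 x hx2 hxB hxD
          rcases (hmem a).1 haD with rfl | rfl
          · exact hA.2 haA
          · exact hA.1 haA
  -- small sets never dominate
  have hbig1 : ∀ v : V, ∃ y ∈ V1, y ≠ v := by
    intro v
    by_contra h
    push_neg at h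
    have hsub : V1 ⊆ {v} := fun y hy => h y hy
    have := Set.ncard_le_ncard hsub (Set.finite_singleton v)
    rw [Set.ncard_singleton] at this
    omega
  have hbig2 : ∀ v : V, ∃ y ∈ V2, y ≠ v := by
    intro v
    by_contra h
    push_neg at h
    have hsub : V2 ⊆ {v} := fun y hy => h y hy
    have := Set.ncard_le_ncard hsub (Set.finite_singleton v)
    rw [Set.ncard_singleton] at this
    omega
  have hsmall : ∀ (H : SimpleGraph V), (∀ a b, H.Adj a b → G.Adj a b) →
      (¬ IsDomSet H ∅) ∧ ∀ v : V, ¬ IsDomSet H (insert v ∅) := by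
    intro H hle
    constructor
    · intro h
      rcases h a1 with h' | ⟨z, hz, -⟩
      · exact Set.notMem_empty a1 h'
      · exact Set.notMem_empty z hz
    · intro v h
      rcases hcov v with hv | hv
      · obtain ⟨y, hyV, hyv⟩ := hbig1 v
        rcases h y with h' | ⟨z, hz, hadj⟩
        · exact hyv (by simpa using h')
        · have hz' : z = v := by simpa using hz
          subst hz'
          exact hnadj1 z hv y hyV (hle _ _ hadj)
      · obtain ⟨y, hyV, hyv⟩ := hbig2 v
        rcases h y with h' | ⟨z, hz, hadj⟩
        · exact hyv (by simpa using h')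
        · have hz' : z = v := by simpa using hz
          subst hz'
          exact hnadj2 z hv y hyV (hle _ _ hadj)
  -- Dominator wins within two moves in the S-game on G
  have hpos : DWinS G 2 ∅ ∅ := by
    refine Or.inr ⟨⟨a1, by simp⟩, ?_⟩
    intro w hw
    obtain ⟨v, hvw, hkey⟩ : ∃ v, v ≠ w ∧
        (((v = a1 ∨ v = a2) ∧ w ≠ b1 ∧ w ≠ b2) ∨ ((v = b1 ∨ v = b2) ∧ w ≠ a1 ∧ w ≠ a2)) := by
      by_cases hwa1 : w = a1
      · exact ⟨a2, fun h => hane (h.trans hwa1).symm,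
          Or.inl ⟨Or.inr rfl, fun h => hab a1 ha1A b1 hb1B (hwa1.symm.trans h),
            fun h => hab a1 ha1A b2 hb2B (hwa1.symm.trans h)⟩⟩
      by_cases hwa2 : w = a2
      · exact ⟨a1, fun h => hane (h.trans hwa2),
          Or.inl ⟨Or.inl rfl, fun h => hab a2 ha2A b1 hb1B (hwa2.symm.trans h),
            fun h => hab a2 ha2A b2 hb2B (hwa2.symm.trans h)⟩⟩
      by_cases hwb1 : w = b1
      · exact ⟨b2, fun h => hbne (h.trans hwb1).symm,
          Or.inr ⟨Or.inr rfl, fun h => hab a1 ha1A b1 hb1B (h.symm.trans hwb1),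
            fun h => hab a2 ha2A b1 hb1B (h.symm.trans hwb1)⟩⟩
      by_cases hwb2 : w = b2
      · exact ⟨b1, fun h => hbne (h.trans hwb2),
          Or.inr ⟨Or.inl rfl, fun h => hab a1 ha1A b2 hb2B (h.symm.trans hwb2),
            fun h => hab a2 ha2A b2 hb2B (h.symm.trans hwb2)⟩⟩
      · exact ⟨a1, fun h => hwa1 h.symm, Or.inl ⟨Or.inl rfl, hwb1, hwb2⟩⟩
    have hexw2 : ∃ z, z ∉ (insert v ∅ : Set V) ∪ insert w ∅ := by
      obtain ⟨z, h1, h2⟩ := h3 v w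
      exact ⟨z, by simp [h1, h2]⟩
    refine Or.inr ⟨v, by simp [hvw], Or.inr ⟨hexw2, ?_⟩⟩
    intro w' hw'
    have hw2 : ¬w' = w ∧ ¬w' = v := by simpa using hw'
    rcases hkey with ⟨hva, hwb1, hwb2⟩ | ⟨hvb, hwa1, hwa2⟩
    · obtain ⟨u, hub, huw'⟩ : ∃ u, (u = b1 ∨ u = b2) ∧ u ≠ w' := by
        by_cases h : w' = b1
        · exact ⟨b2, Or.inr rfl, fun h' => hbne (h'.trans h).symm⟩
        · exact ⟨b1, Or.inl rfl, fun h' => h h'.symm⟩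
      have hvA : v ∈ A := by rcases hva with rfl | rfl; exacts [ha1A, ha2A]
      have huB : u ∈ B := by rcases hub with rfl | rfl; exacts [hb1B, hb2B]
      have huv : u ≠ v := (hab v hvA u huB).symm
      have huw : u ≠ w := by
        rcases hub with rfl | rfl
        · exact fun h => hwb1 h.symm
        · exact fun h => hwb2 h.symm
      exact Or.inr ⟨u, by simp [huv, huw', huw],
        Or.inl (hdomAB v u hvA huB _ (by simp) (by simp))⟩
    · obtain ⟨u, hua, huw'⟩ : ∃ u, (u = a1 ∨ u = a2) ∧ u ≠ w' := by
        by_cases h : w' = a1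
        · exact ⟨a2, Or.inr rfl, fun h' => hane (h'.trans h).symm⟩
        · exact ⟨a1, Or.inl rfl, fun h' => h h'.symm⟩
      have huA : u ∈ A := by rcases hua with rfl | rfl; exacts [ha1A, ha2A]
      have hvB : v ∈ B := by rcases hvb with rfl | rfl; exacts [hb1B, hb2B]
      have huv : u ≠ v := hab u huA v hvB
      have huw : u ≠ w := by
        rcases hua with rfl | rfl
        · exact fun h => hwa1 h.symm
        · exact fun h => hwa2 h.symm
      exact Or.inr ⟨u, by simp [huv, huw', huw],
        Or.inl (hdomAB u v huA hvB _ (by simp) (by simp))⟩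
  obtain ⟨hG0, hG1⟩ := hsmall G (fun a b h => h)
  have hlow : ∀ k : ℕ, DWinS G k ∅ ∅ → 2 ≤ k := by
    intro k hk
    by_contra h
    push_neg at h
    interval_cases k
    · exact aux0 hG0 hk
    · exact aux1 hG0 hG1 hk
  have hg2 : gammaMB' G = 2 := by
    apply le_antisymm
    · exact sInf_le ⟨2, hpos, by norm_num⟩
    · apply le_sInf
      rintro x ⟨k, hk, rfl⟩
      exact_mod_cast hlow k hk
  refine ⟨hg2, ?_⟩
  have key : ∀ u0 v0 : V, G.Adj u0 v0 → u0 ∈ V1 → v0 ∈ V2 →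
      ¬ DWinS (G.deleteEdges {s(u0, v0)}) 2 ∅ ∅ := by
    intro u0 v0 hadj hu0 hv0
    set H := G.deleteEdges {s(u0, v0)} with hH
    have hle : ∀ a b, H.Adj a b → G.Adj a b := by
      intro a b h
      rw [hH, SimpleGraph.deleteEdges_adj] at h
      exact h.1
    have hnotH : ¬ H.Adj u0 v0 := by
      rw [hH, SimpleGraph.deleteEdges_adj]
      simp
    obtain ⟨hH0, hH1⟩ := hsmall H hle
    by_cases hu0A : u0 ∈ A
    · by_cases hv0B : v0 ∈ B
      · -- case i : edge between two bipartite dominating vertices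
        obtain ⟨a', ha'A, ha'ne, ha'all⟩ := hotherA u0 hu0A
        obtain ⟨b', hb'B, hb'ne, hb'all⟩ := hotherB v0 hv0B
        have hpair : ∀ v u : V, (v = a' ∧ u = v0) ∨ (v = v0 ∧ u = a') →
            IsDomSet H (insert u (insert v ∅)) → False := by
          intro v u hvu hdom
          have hmem' : ∀ z, z ∈ (insert u (insert v ∅) : Set V) → z = a' ∨ z = v0 := by
            intro z hz
            have h' : z = u ∨ z = v := by simpa using hz
            rcases hvu with ⟨h1, h2⟩ | ⟨h1, h2⟩
            · rcases h' with h' | h'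
              · exact Or.inr (h'.trans h2)
              · exact Or.inl (h'.trans h1)
            · rcases h' with h' | h'
              · exact Or.inl (h'.trans h2)
              · exact Or.inr (h'.trans h1)
          rcases hdom u0 with h | ⟨z, hzD, hadjz⟩
          · rcases hmem' u0 h with h' | h'
            · exact ha'ne h'.symm
            · exact hndV u0 hu0 v0 hv0 h'
          · rcases hmem' z hzD with h' | h'
            · have hg : G.Adj a' u0 := by rw [← h']; exact hle _ _ hadjz
              exact hnadj1 a' (hAV1 ha'A) u0 hu0 hg
            · have hg : H.Adj u0 v0 := by rw [← h']; exact hadjz.symm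
              exact hnotH hg
        apply aux2 u0 hH0 hH1
        intro v hv
        by_cases hva' : v = a'
        · refine ⟨b', (hndV u0 hu0 b' (hBV2 hb'B)).symm,
            fun h => hndV a' (hAV1 ha'A) b' (hBV2 hb'B) (h.trans hva').symm, ?_⟩
          intro u huv huu0 hub' hdom
          have hvu : v ≠ u := fun h => huv h.symm
          rcases master H hle v u hvu hdom with (⟨hvA, huB⟩ | ⟨huA, hvB⟩) | ⟨hcsub, hdsub⟩
          · have hu' : u = v0 := (hb'all u huB).resolve_right hub'
            exact hpair v u (Or.inl ⟨hva', hu'⟩) hdom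
          · exact hdj v (hAV1 (by rw [hva']; exact ha'A)) (hBV2 hvB)
          · have h1 : c0 = u ∨ c0 = v := by simpa using hcsub ⟨hc0V, hc0A⟩
            have h2 : d0 = u ∨ d0 = v := by simpa using hdsub ⟨hd0V, hd0B⟩
            have hc0v : c0 ≠ v := fun h => hc0A (by rw [h, hva']; exact ha'A)
            have hd0v : d0 ≠ v := fun h => hdj d0 (by rw [h, hva']; exact hAV1 ha'A) hd0V
            exact hndV c0 hc0V d0 hd0V
              ((h1.resolve_right hc0v).trans (h2.resolve_right hd0v).symm)
        by_cases hvb' : v = b'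
        · refine ⟨a', ha'ne,
            fun h => hndV a' (hAV1 ha'A) b' (hBV2 hb'B) (h.trans hvb'), ?_⟩
          intro u huv huu0 hua' hdom
          have hvu : v ≠ u := fun h => huv h.symm
          rcases master H hle v u hvu hdom with (⟨hvA, huB⟩ | ⟨huA, hvB⟩) | ⟨hcsub, hdsub⟩
          · exact hdj v (hAV1 hvA) (hBV2 (by rw [hvb']; exact hb'B))
          · rcases ha'all u huA with h | h
            · exact huu0 h
            · exact hua' h
          · have h1 : c0 = u ∨ c0 = v := by simpa using hcsub ⟨hc0V, hc0A⟩
            have h2 : d0 = u ∨ d0 = v := by simpa using hdsub ⟨hd0V, hd0B⟩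
            have hc0v : c0 ≠ v := fun h => hdj c0 hc0V (by rw [h, hvb']; exact hBV2 hb'B)
            have hd0v : d0 ≠ v := fun h => hd0B (by rw [h, hvb']; exact hb'B)
            exact hndV c0 hc0V d0 hd0V
              ((h1.resolve_right hc0v).trans (h2.resolve_right hd0v).symm)
        by_cases hvV1 : v ∈ V1
        · refine ⟨d0, (hndV u0 hu0 d0 hd0V).symm, (hndV v hvV1 d0 hd0V).symm, ?_⟩
          intro u huv huu0 hud0 hdom
          have hvu : v ≠ u := fun h => huv h.symm
          rcases master H hle v u hvu hdom with (⟨hvA, huB⟩ | ⟨huA, hvB⟩) | ⟨hcsub, hdsub⟩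
          · rcases ha'all v hvA with h | h
            · exact hv h
            · exact hva' h
          · exact hdj v hvV1 (hBV2 hvB)
          · have h2 : d0 = u ∨ d0 = v := by simpa using hdsub ⟨hd0V, hd0B⟩
            rcases h2 with h | h
            · exact hud0 h.symm
            · exact hndV v hvV1 d0 hd0V h.symm
        · have hvV2 : v ∈ V2 := (hcov v).resolve_left hvV1
          refine ⟨c0, fun h => hc0A (by rw [h]; exact hu0A), hndV c0 hc0V v hvV2, ?_⟩
          intro u huv huu0 huc0 hdom
          have hvu : v ≠ u := fun h => huv h.symm
          rcases master H hle v u hvu hdom with (⟨hvA, huB⟩ | ⟨huA, hvB⟩) | ⟨hcsub, hdsub⟩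
          · exact hdj v (hAV1 hvA) hvV2
          · have hu' : u = a' := (ha'all u huA).resolve_left huu0
            have hv' : v = v0 := (hb'all v hvB).resolve_right hvb'
            exact hpair v u (Or.inr ⟨hv', hu'⟩) hdom
          · have h1 : c0 = u ∨ c0 = v := by simpa using hcsub ⟨hc0V, hc0A⟩
            rcases h1 with h | h
            · exact huc0 h.symm
            · exact hndV c0 hc0V v hvV2 h
      · -- case ii : u0 ∈ A, v0 ∉ B
        obtain ⟨a', ha'A, ha'ne, ha'all⟩ := hotherA u0 hu0A
        apply aux2 a' hH0 hH1
        intro v hv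
        obtain ⟨w1, hw1v, hw1a⟩ := h3 v a'
        refine ⟨w1, hw1a, hw1v, ?_⟩
        intro u huv hua' huw1 hdom
        have hvu : v ≠ u := fun h => huv h.symm
        rcases master H hle v u hvu hdom with (⟨hvA, huB⟩ | ⟨huA, hvB⟩) | ⟨hcsub, hdsub⟩
        · have hv0' : v = u0 := (ha'all v hvA).resolve_right hv
          rcases hdom v0 with h | ⟨z, hzD, hadjz⟩
          · have h' : v0 = u ∨ v0 = v := by simpa using h
            rcases h' with h' | h'
            · exact hv0B (by rw [h']; exact huB)
            · exact hndV u0 hu0 v0 hv0 (h'.trans hv0').symm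
          · have hzA : z ∈ A := (hnb2 v0 hv0 hv0B z).mp ((hle _ _ hadjz).symm)
            have h' : z = u ∨ z = v := by simpa using hzD
            rcases h' with h' | h'
            · have hzB : z ∈ B := by rw [h']; exact huB
              exact hdj z (hAV1 hzA) (hBV2 hzB)
            · exact hnotH (by rw [← (h'.trans hv0')]; exact hadjz)
        · have hu' : u = u0 := (ha'all u huA).resolve_right hua'
          rcases hdom v0 with h | ⟨z, hzD, hadjz⟩
          · have h' : v0 = u ∨ v0 = v := by simpa using h
            rcases h' with h' | h'
            · exact hndV u0 hu0 v0 hv0 (h'.trans hu').symm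
            · exact hv0B (by rw [h']; exact hvB)
          · have hzA : z ∈ A := (hnb2 v0 hv0 hv0B z).mp ((hle _ _ hadjz).symm)
            have h' : z = u ∨ z = v := by simpa using hzD
            rcases h' with h' | h'
            · exact hnotH (by rw [← (h'.trans hu')]; exact hadjz)
            · have hzB : z ∈ B := by rw [h']; exact hvB
              exact hdj z (hAV1 hzA) (hBV2 hzB)
        · have hc0D : c0 ∈ (insert u (insert v ∅) : Set V) := hcsub ⟨hc0V, hc0A⟩
          have hv0D : v0 ∈ (insert u (insert v ∅) : Set V) := hdsub ⟨hv0, hv0B⟩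
          have hc0v0 : c0 ≠ v0 := hndV c0 hc0V v0 hv0
          have h1 : c0 = u ∨ c0 = v := by simpa using hc0D
          have h2 : v0 = u ∨ v0 = v := by simpa using hv0D
          have hmemD : ∀ z, z ∈ (insert u (insert v ∅) : Set V) → z = c0 ∨ z = v0 := by
            intro z hz
            have h3' : z = u ∨ z = v := by simpa using hz
            rcases h1 with h1 | h1 <;> rcases h2 with h2 | h2
            · exact absurd (h1.trans h2.symm) hc0v0
            · rcases h3' with rfl | rfl
              · exact Or.inl h1.symm
              · exact Or.inr h2.symm
            · rcases h3' with rfl | rfl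
              · exact Or.inr h2.symm
              · exact Or.inl h1.symm
            · exact absurd (h1.trans h2.symm) hc0v0
          rcases hdom u0 with h | ⟨z, hzD, hadjz⟩
          · rcases hmemD u0 h with h' | h'
            · exact hc0A (by rw [← h']; exact hu0A)
            · exact hndV u0 hu0 v0 hv0 h'
          · rcases hmemD z hzD with h' | h'
            · have hg : G.Adj c0 u0 := by rw [← h']; exact hle _ _ hadjz
              have hb : u0 ∈ B := (hnb1 c0 hc0V hc0A u0).mp hg
              exact hdj u0 hu0 (hBV2 hb)
            · exact hnotH (by rw [← h']; exact hadjz.symm)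
    · -- case iii : u0 ∉ A, hence v0 ∈ B
      have hv0B : v0 ∈ B := (hnb1 u0 hu0 hu0A v0).mp hadj
      obtain ⟨b', hb'B, hb'ne, hb'all⟩ := hotherB v0 hv0B
      apply aux2 b' hH0 hH1
      intro v hv
      obtain ⟨w1, hw1v, hw1b⟩ := h3 v b'
      refine ⟨w1, hw1b, hw1v, ?_⟩
      intro u huv hub' huw1 hdom
      have hvu : v ≠ u := fun h => huv h.symm
      rcases master H hle v u hvu hdom with (⟨hvA, huB⟩ | ⟨huA, hvB⟩) | ⟨hcsub, hdsub⟩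
      · have hu' : u = v0 := (hb'all u huB).resolve_right hub'
        rcases hdom u0 with h | ⟨z, hzD, hadjz⟩
        · have h' : u0 = u ∨ u0 = v := by simpa using h
          rcases h' with h' | h'
          · exact hndV u0 hu0 v0 hv0 (h'.trans hu')
          · exact hu0A (by rw [h']; exact hvA)
        · have hzB : z ∈ B := (hnb1 u0 hu0 hu0A z).mp ((hle _ _ hadjz).symm)
          have h' : z = u ∨ z = v := by simpa using hzD
          rcases h' with h' | h'
          · exact hnotH (by rw [← (h'.trans hu')]; exact hadjz.symm)
          · have hzA : z ∈ A := by rw [h']; exact hvA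
            exact hdj z (hAV1 hzA) (hBV2 hzB)
      · have hv' : v = v0 := (hb'all v hvB).resolve_right hv
        rcases hdom u0 with h | ⟨z, hzD, hadjz⟩
        · have h' : u0 = u ∨ u0 = v := by simpa using h
          rcases h' with h' | h'
          · exact hu0A (by rw [h']; exact huA)
          · exact hndV u0 hu0 v0 hv0 (h'.trans hv')
        · have hzB : z ∈ B := (hnb1 u0 hu0 hu0A z).mp ((hle _ _ hadjz).symm)
          have h' : z = u ∨ z = v := by simpa using hzD
          rcases h' with h' | h'
          · have hzA : z ∈ A := by rw [h']; exact huA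
            exact hdj z (hAV1 hzA) (hBV2 hzB)
          · exact hnotH (by rw [← (h'.trans hv')]; exact hadjz.symm)
      · have hu0D : u0 ∈ (insert u (insert v ∅) : Set V) := hcsub ⟨hu0, hu0A⟩
        have hd0D : d0 ∈ (insert u (insert v ∅) : Set V) := hdsub ⟨hd0V, hd0B⟩
        have hu0d0 : u0 ≠ d0 := hndV u0 hu0 d0 hd0V
        have h1 : u0 = u ∨ u0 = v := by simpa using hu0D
        have h2 : d0 = u ∨ d0 = v := by simpa using hd0D
        have hmemD : ∀ z, z ∈ (insert u (insert v ∅) : Set V) → z = u0 ∨ z = d0 := by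
          intro z hz
          have h3' : z = u ∨ z = v := by simpa using hz
          rcases h1 with h1 | h1 <;> rcases h2 with h2 | h2
          · exact absurd (h1.trans h2.symm) hu0d0
          · rcases h3' with rfl | rfl
            · exact Or.inl h1.symm
            · exact Or.inr h2.symm
          · rcases h3' with rfl | rfl
            · exact Or.inr h2.symm
            · exact Or.inl h1.symm
          · exact absurd (h1.trans h2.symm) hu0d0
        rcases hdom v0 with h | ⟨z, hzD, hadjz⟩
        · rcases hmemD v0 h with h' | h'
          · exact hndV u0 hu0 v0 hv0 h'.symm
          · exact hd0B (by rw [← h']; exact hv0B)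
        · rcases hmemD z hzD with h' | h'
          · exact hnotH (by rw [← h']; exact hadjz)
          · have hg : G.Adj d0 v0 := by rw [← h']; exact hle _ _ hadjz
            have hvA : v0 ∈ A := (hnb2 d0 hd0V hd0B v0).mp hg
            exact hdj v0 (hAV1 hvA) hv0
  intro e he
  rw [hg2]
  induction e using Sym2.ind with
  | _ x y =>
    rw [SimpleGraph.mem_edgeSet] at he
    have hnot2 : ¬ DWinS (G.deleteEdges {s(x, y)}) 2 ∅ ∅ := by
      rcases hbip x y he with ⟨hx, hy⟩ | ⟨hx, hy⟩
      · exact key x y he hx hy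
      · have h := key y x he.symm hy hx
        rwa [Sym2.eq_swap] at h
    have hle : ∀ a b, (G.deleteEdges {s(x, y)}).Adj a b → G.Adj a b := by
      intro a b h
      rw [SimpleGraph.deleteEdges_adj] at h
      exact h.1
    obtain ⟨h0', h1'⟩ := hsmall _ hle
    have hlow3 : ∀ k : ℕ, DWinS (G.deleteEdges {s(x, y)}) k ∅ ∅ → 3 ≤ k := by
      intro k hk
      by_contra h
      push_neg at h
      interval_cases k
      · exact aux0 h0' hk
      · exact aux1 h0' h1' hk
      · exact hnot2 hk
    have h3' : (3 : ℕ∞) ≤ gammaMB' (G.deleteEdges {s(x, y)}) := by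
      apply le_sInf
      rintro t ⟨k, hk, rfl⟩
      exact_mod_cast hlow3 k hk
    exact lt_of_lt_of_le (by norm_num : (2 : ℕ∞) < 3) h3'
end
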